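/- arXiv:1403.3019 — 12 statements merged into one kernel-verified Lean document; each statement's English description precedes it below -/
import Mathlib

section
/- Let (S,ρ) be an involutive nondegenerate set-theoretic solution of the Yang–Baxter equation. For s,t in S define s∘t to be the unique element r of S satisfying ρ₁(s,r) = t. Then (S,∘) is a bijective RC-quasigroup: the operation ∘ obeys the right-cyclic law, every left-translation t ↦ s∘t is a bijection of S, and the map (s,t) ↦ (s∘t, t∘s) is a bijection of S×S onto itself. -/
/-- The right-cyclic law: `(x∘y)∘(x∘z) = (y∘x)∘(y∘z)`. -/
def RCLaw {S : Type*} (op : S → S → S) : Prop :=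
  ∀ x y z : S, op (op x y) (op x z) = op (op y x) (op y z)

/-- The map `ρ¹²` acting on the first two entries of `S³`. -/
def yb12 {S : Type*} (ρ : S × S → S × S) : S × S × S → S × S × S :=
  fun p => ((ρ (p.1, p.2.1)).1, (ρ (p.1, p.2.1)).2, p.2.2)

/-- The map `ρ²³` acting on the last two entries of `S³`. -/
def yb23 {S : Type*} (ρ : S × S → S × S) : S × S × S → S × S × S :=
  fun p => (p.1, (ρ (p.2.1, p.2.2)).1, (ρ (p.2.1, p.2.2)).2)

/-- If `(S,ρ)` is an involutive nondegenerate set-theoretic solution of the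
Yang–Baxter equation and `s ∘ t` is the unique `r` with `ρ₁(s,r) = t`, then `(S,∘)` is a
bijective RC-quasigroup. -/
theorem statement0 {S : Type*} (ρ : S × S → S × S)
    (hbij : Function.Bijective ρ)
    (hYB : yb12 ρ ∘ yb23 ρ ∘ yb12 ρ = yb23 ρ ∘ yb12 ρ ∘ yb23 ρ)
    (hnd₁ : ∀ s : S, Function.Bijective fun y => (ρ (s, y)).1)
    (hnd₂ : ∀ t : S, Function.Bijective fun x => (ρ (x, t)).2)
    (hinv : ∀ p : S × S, ρ (ρ p) = p)
    (op : S → S → S)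
    (hop : ∀ s t : S, (ρ (s, op s t)).1 = t) :
    RCLaw op ∧ (∀ s : S, Function.Bijective (op s)) ∧
      Function.Bijective (fun p : S × S => (op p.1 p.2, op p.2 p.1)) := by
  set lam : S → S → S := fun s t => (ρ (s, t)).1 with hlam
  have hlinj : ∀ s : S, Function.Injective (lam s) := fun s => (hnd₁ s).injective
  have hoplam : ∀ s t : S, lam s (op s t) = t := hop
  -- key formula: ρ (a,b) = (lam a b, op (lam a b) a)
  have hkey : ∀ a b : S, ρ (a, b) = (lam a b, op (lam a b) a) := by
    intro a b
    have h2 : (ρ (a, b)).2 = op (lam a b) a := by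
      apply hlinj (lam a b)
      have : lam (lam a b) (ρ (a, b)).2 = (ρ (ρ (a, b))).1 := by
        simp [hlam]
      rw [this, hinv, hoplam]
    exact Prod.ext rfl h2
  have hrho : ∀ s t : S, ρ (s, op s t) = (t, op t s) := by
    intro s t
    have := hkey s (op s t)
    rwa [show lam s (op s t) = t from hop s t] at this
  -- bijectivity of left translations
  have hopbij : ∀ s : S, Function.Bijective (op s) := by
    intro s
    constructor
    · intro a b h
      have := congrArg (lam s) h
      rwa [hoplam, hoplam] at this
    · intro r
      refine ⟨lam s r, hlinj s ?_⟩
      rw [hoplam]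
  -- the star identity from the YBE
  have hstar : ∀ x y z : S, lam y (lam (op y x) z) = lam x (lam (op x y) z) := by
    intro x y z
    have h := congrArg Prod.fst (congrFun hYB (x, op x y, z))
    simp only [Function.comp_apply, yb12, yb23] at h
    rw [show ρ (x, op x y) = (y, op y x) from hrho x y] at h
    exact h
  refine ⟨?_, hopbij, ?_, ?_⟩
  · -- RC law
    intro x y z
    apply hlinj (op x y)
    apply hlinj x
    rw [hoplam, hoplam, ← hstar x y (op (op y x) (op y z)), hoplam, hoplam]
  · -- injectivity of T
    rintro ⟨s, t⟩ ⟨s', t'⟩ h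
    simp only [Prod.mk.injEq] at h
    obtain ⟨h1, h2⟩ := h
    have e1 : ρ (s, op s t) = (t, op t s) := hrho s t
    have e2 : ρ (s', op s t) = (t', op t' s') := by rw [h1]; exact hrho s' t'
    have hs : s = s' := by
      apply (hnd₂ (op s t)).injective
      show (ρ (s, op s t)).2 = (ρ (s', op s t)).2
      rw [e1, e2, h2]
    subst hs
    have ht : t = t' := (hopbij s).injective h1
    simp [ht]
  · -- surjectivity of T
    rintro ⟨a, b⟩
    obtain ⟨s, hs⟩ := (hnd₂ a).surjective b
    set t := lam s a with htdef
    have h1 : op s t = a := by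
      apply hlinj s
      rw [hoplam]
    have hρ : ρ (s, a) = (t, b) := Prod.ext rfl hs
    have hρ' : ρ (t, b) = (s, a) := by
      have := hinv (s, a)
      rwa [hρ] at this
    have h2 : op t s = b := by
      apply hlinj t
      rw [hoplam]
      show s = (ρ (t, b)).1
      rw [hρ']
    exact ⟨(s, t), by simp [h1, h2]⟩
end

section
/- Let (S,∘) be a bijective RC-quasigroup. For a,b in S define ρ(a,b) to be the unique pair (a′,b′) satisfying a∘a′ = b and a′∘a = b′. Then (S,ρ) is an involutive nondegenerate set-theoretic solution of the Yang–Baxter equation. -/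
/-- If `(S,∘)` is a bijective RC-quasigroup and `ρ(a,b)` is the unique pair
`(a′,b′)` with `a∘a′ = b` and `a′∘a = b′`, then `(S,ρ)` is an involutive nondegenerate
set-theoretic solution of the Yang–Baxter equation. -/
theorem statement1 {S : Type*} (op : S → S → S)
    (hRC : RCLaw op)
    (hlb : ∀ s : S, Function.Bijective (op s))
    (hΨ : Function.Bijective (fun p : S × S => (op p.1 p.2, op p.2 p.1)))
    (ρ : S × S → S × S)
    (hρ : ∀ a b : S, op a (ρ (a, b)).1 = b ∧ (ρ (a, b)).2 = op (ρ (a, b)).1 a) :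
    Function.Bijective ρ ∧
      (yb12 ρ ∘ yb23 ρ ∘ yb12 ρ = yb23 ρ ∘ yb12 ρ ∘ yb23 ρ) ∧
      (∀ s : S, Function.Bijective fun y => (ρ (s, y)).1) ∧
      (∀ t : S, Function.Bijective fun x => (ρ (x, t)).2) ∧
      (∀ p : S × S, ρ (ρ p) = p) := by
  -- key computation: ρ (a, a∘b) = (b, b∘a)
  have fact1 : ∀ a b : S, ρ (a, op a b) = (b, op b a) := by
    intro a b
    obtain ⟨h1, h2⟩ := hρ a (op a b)
    have hb : (ρ (a, op a b)).1 = b := (hlb a).1 h1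
    exact Prod.ext hb (by rw [h2, hb])
  -- involutivity
  have hinv : ∀ p : S × S, ρ (ρ p) = p := by
    rintro ⟨a, b⟩
    obtain ⟨h1, h2⟩ := hρ a b
    have hrw : ρ (a, b) = ((ρ (a, b)).1, op (ρ (a, b)).1 a) := Prod.ext rfl h2
    calc ρ (ρ (a, b)) = ρ ((ρ (a, b)).1, op (ρ (a, b)).1 a) := by rw [← hrw]
      _ = (a, op a (ρ (a, b)).1) := fact1 _ _
      _ = (a, b) := by rw [h1]
  refine ⟨Function.bijective_iff_has_inverse.2 ⟨ρ, hinv, hinv⟩, ?_, ?_, ?_, hinv⟩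
  · -- Yang–Baxter equation
    funext p
    obtain ⟨a, b, c⟩ := p
    obtain ⟨y, rfl⟩ := (hlb a).2 b
    obtain ⟨w', rfl⟩ := (hlb (op y a)).2 c
    obtain ⟨w, rfl⟩ := (hlb y).2 w'
    have hc : op (op y a) (op y w) = op (op a y) (op a w) := (hRC y a w).symm ▸ (hRC y a w)
    simp only [Function.comp_apply, yb12, yb23]
    rw [fact1 a y]
    simp only []
    rw [fact1 (op y a) (op y w)]
    simp only []
    rw [fact1 y w]
    -- LHS done: (w, op w y, op (op y w) (op y a))
    rw [hRC y a w, fact1 (op a y) (op a w)]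
    simp only []
    rw [fact1 a w]
    simp only []
    rw [hRC a w y, fact1 (op w a) (op w y)]
    simp only []
    exact Prod.ext rfl (Prod.ext rfl (hRC y w a))
  · -- left nondegeneracy
    intro s
    refine Function.bijective_iff_has_inverse.2 ⟨op s, fun y => (hρ s y).1, ?_⟩
    intro b
    simp only [fact1 s b]
  · -- right nondegeneracy
    intro t
    constructor
    · intro x₁ x₂ h
      simp only at h
      have e1 : (fun p : S × S => (op p.1 p.2, op p.2 p.1)) ((ρ (x₁, t)).1, x₁)
          = ((ρ (x₁, t)).2, t) := by
        obtain ⟨h1, h2⟩ := hρ x₁ t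
        simp only [h1, h2]
      have e2 : (fun p : S × S => (op p.1 p.2, op p.2 p.1)) ((ρ (x₂, t)).1, x₂)
          = ((ρ (x₂, t)).2, t) := by
        obtain ⟨h1, h2⟩ := hρ x₂ t
        simp only [h1, h2]
      have := hΨ.1 (e1.trans ((h ▸ e2).symm))
      exact congrArg Prod.snd this
    · intro u
      obtain ⟨⟨p, q⟩, hpq⟩ := hΨ.2 (u, t)
      simp only [Prod.mk.injEq] at hpq
      refine ⟨q, ?_⟩
      have : ρ (q, t) = (p, op p q) := by rw [← hpq.2]; exact fact1 q p
      simp only [this, hpq.1]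
end

section
/- Let (S,∘) be an RC-system. Then for all n ≥ 1, all s₁,…,sₙ in S and every permutation π of {1,…,n−1}, one has Ωₙ(s_{π(1)},…,s_{π(n−1)}, sₙ) = Ωₙ(s₁,…,sₙ). -/
/-- The monomials `Ωₙ`: `OmegaFin op n x` is `Ω_{n+1}(x₀,…,xₙ)`, defined by `Ω₁(x₁) = x₁` and
`Ωₙ(x₁,…,xₙ) = Ω_{n−1}(x₁,…,x_{n−1}) ∘ Ω_{n−1}(x₁,…,x_{n−2},xₙ)`. -/
def OmegaFin {S : Type*} (op : S → S → S) : (n : ℕ) → (Fin (n + 1) → S) → S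
  | 0, x => x 0
  | n + 1, x =>
      op (OmegaFin op n fun i => x i.castSucc)
         (OmegaFin op n fun i => if (i : ℕ) = n then x (Fin.last (n + 1)) else x i.castSucc)

section Aux

variable {S : Type*} (op : S → S → S)

lemma Omega_succ (n : ℕ) (x : Fin (n + 2) → S) :
    OmegaFin op (n + 1) x =
      op (OmegaFin op n fun i => x i.castSucc)
         (OmegaFin op n fun i => if (i : ℕ) = n then x (Fin.last (n + 1)) else x i.castSucc) :=
  rfl

lemma omega_congr (n : ℕ) {f g : Fin (n + 1) → S} (h : ∀ i, f i = g i) :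
    OmegaFin op n f = OmegaFin op n g := by
  rw [funext h]

lemma expand2 (k : ℕ) (x : Fin (k + 3) → S) :
    OmegaFin op (k + 2) x =
      op (op
          (OmegaFin op k fun i => if (i : ℕ) = k then x ⟨k, by omega⟩ else x i.castSucc.castSucc)
          (OmegaFin op k fun i =>
            if (i : ℕ) = k then x ⟨k + 1, by omega⟩ else x i.castSucc.castSucc))
        (op
          (OmegaFin op k fun i => if (i : ℕ) = k then x ⟨k, by omega⟩ else x i.castSucc.castSucc)
          (OmegaFin op k fun i =>
            if (i : ℕ) = k then x ⟨k + 2, by omega⟩ else x i.castSucc.castSucc)) := by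
  rw [Omega_succ, Omega_succ, Omega_succ]
  refine congrArg₂ op (congrArg₂ op ?_ ?_) (congrArg₂ op ?_ ?_)
  · refine omega_congr op k fun i => ?_
    by_cases h : (i : ℕ) = k
    · rw [if_pos h]; congr 1; ext; simpa using h
    · rw [if_neg h]
  · refine omega_congr op k fun i => ?_
    by_cases h : (i : ℕ) = k
    · rw [if_pos h, if_pos h]; congr 1
    · rw [if_neg h, if_neg h]
  · refine omega_congr op k fun i => ?_
    have hi := i.isLt
    have h1 : ¬ ((i.castSucc : ℕ) = k + 1) := by simp; omega
    rw [if_neg h1]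
    by_cases h : (i : ℕ) = k
    · rw [if_pos h]; congr 1; ext; simpa using h
    · rw [if_neg h]
  · refine omega_congr op k fun i => ?_
    have hi := i.isLt
    by_cases h : (i : ℕ) = k
    · rw [if_pos h, if_pos h, if_pos (by simp : ((Fin.last (k+1) : Fin (k+2)) : ℕ) = k + 1)]
      congr 1
    · rw [if_neg h, if_neg h, if_neg (by simp; omega : ¬ ((i.castSucc : ℕ) = k + 1))]

lemma keyB (hRC : RCLaw op) (k : ℕ) (s : Fin (k + 3) → S) :
    OmegaFin op (k + 2)
        (s ∘ (Equiv.swap (⟨k, by omega⟩ : Fin (k + 3)) ⟨k + 1, by omega⟩)) =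
      OmegaFin op (k + 2) s := by
  set a : Fin (k + 3) := ⟨k, by omega⟩ with ha
  set b : Fin (k + 3) := ⟨k + 1, by omega⟩ with hb
  set c : Fin (k + 3) := ⟨k + 2, by omega⟩ with hc
  rw [expand2, expand2]
  have hQ : ∀ z : S,
      (OmegaFin op k fun i =>
        if (i : ℕ) = k then z else (s ∘ (Equiv.swap a b)) i.castSucc.castSucc) =
      OmegaFin op k fun i => if (i : ℕ) = k then z else s i.castSucc.castSucc := by
    intro z
    refine omega_congr op k fun i => ?_
    by_cases h : (i : ℕ) = k
    · rw [if_pos h, if_pos h]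
    · rw [if_neg h, if_neg h]
      have hi := i.isLt
      show s (Equiv.swap a b i.castSucc.castSucc) = _
      rw [Equiv.swap_apply_of_ne_of_ne]
      · exact Fin.ne_of_val_ne h
      · exact Fin.ne_of_val_ne (show (i : ℕ) ≠ k + 1 by omega)
  have hva : (s ∘ (Equiv.swap a b)) a = s b := by
    simp [Equiv.swap_apply_left]
  have hvb : (s ∘ (Equiv.swap a b)) b = s a := by
    simp [Equiv.swap_apply_right]
  have hvc : (s ∘ (Equiv.swap a b)) c = s c := by
    have h1 : c ≠ a := Fin.ne_of_val_ne (show k + 2 ≠ k by omega)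
    have h2 : c ≠ b := Fin.ne_of_val_ne (show k + 2 ≠ k + 1 by omega)
    simp [Equiv.swap_apply_of_ne_of_ne h1 h2]
  rw [hQ, hQ, hQ, hva, hvb, hvc]
  exact (hRC _ _ _).symm

theorem key (hRC : RCLaw op) :
    ∀ (n : ℕ) (σ : Equiv.Perm (Fin (n + 1))), σ (Fin.last n) = Fin.last n →
      ∀ s : Fin (n + 1) → S, OmegaFin op n (s ∘ σ) = OmegaFin op n s := by
  intro n
  induction n with
  | zero =>
    intro σ h s
    show s (σ 0) = s 0
    have h0 : (0 : Fin 1) = Fin.last 0 := by decide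
    rw [h0, h]
  | succ n IH =>
    have caseA : ∀ (σ : Equiv.Perm (Fin (n + 2))), σ (Fin.last (n + 1)) = Fin.last (n + 1) →
        σ ((Fin.last n).castSucc) = (Fin.last n).castSucc →
        ∀ s : Fin (n + 2) → S, OmegaFin op (n + 1) (s ∘ σ) = OmegaFin op (n + 1) s := by
      intro σ hlast hsnd s
      set e : Option (Fin (n + 1)) ≃ Option (Fin (n + 1)) :=
        finSuccEquivLast.symm.trans (σ.trans finSuccEquivLast) with he
      have henone : e none = none := by simp [he, hlast]
      set σ' := Equiv.removeNone e with hσ'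
      have hcast : ∀ i : Fin (n + 1), σ i.castSucc = (σ' i).castSucc := by
        intro i
        have hne : e (some i) ≠ none := by
          intro hcon
          have := e.injective (hcon.trans henone.symm)
          simp at this
        obtain ⟨j, hj⟩ := Option.ne_none_iff_exists'.mp hne
        have h1 : some (σ' i) = e (some i) := Equiv.removeNone_some e ⟨j, hj⟩
        have h2 : e (some i) = finSuccEquivLast (σ i.castSucc) := by simp [he]
        have h3 : finSuccEquivLast (σ i.castSucc) = some (σ' i) := (h1.trans h2).symm
        have := congrArg finSuccEquivLast.symm h3
        simpa using this
      have hσ'last : σ' (Fin.last n) = Fin.last n := by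
        have := hcast (Fin.last n)
        rw [hsnd] at this
        exact (Fin.castSucc_injective _ this.symm)
      rw [Omega_succ, Omega_succ]
      refine congrArg₂ op ?_ ?_
      · have hI := IH σ' hσ'last (fun j => s j.castSucc)
        refine (omega_congr op n fun i => ?_).trans hI
        show s (σ i.castSucc) = s (σ' i).castSucc
        rw [hcast i]
      · set s₂ : Fin (n + 1) → S :=
          fun j => if (j : ℕ) = n then s (Fin.last (n + 1)) else s j.castSucc with hs₂
        have hI := IH σ' hσ'last s₂
        refine (omega_congr op n fun i => ?_).trans hI
        show (if (i : ℕ) = n then s (σ (Fin.last (n + 1))) else s (σ i.castSucc)) = s₂ (σ' i)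
        by_cases h : (i : ℕ) = n
        · have : i = Fin.last n := Fin.ext (by simpa using h)
          rw [if_pos h, hs₂]
          simp only [this, hσ'last]
          rw [if_pos (by simp), hlast]
        · have hne : σ' i ≠ Fin.last n := by
            intro hcon
            exact h (by simpa using congrArg (Fin.val) (σ'.injective (hcon.trans hσ'last.symm)))
          have hne' : ¬ ((σ' i : ℕ) = n) := fun hcon => hne (Fin.ext (by simpa using hcon))
          rw [if_neg h, hs₂]
          simp only []
          rw [if_neg hne', hcast i]
    intro σ hlast s
    by_cases hfix : σ ((Fin.last n).castSucc) = (Fin.last n).castSucc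
    · exact caseA σ hlast hfix s
    · set j := σ ((Fin.last n).castSucc) with hj
      have hj1 : (j : ℕ) ≠ n := by
        intro hcon
        exact hfix (Fin.ext (by simpa using hcon))
      have hj2 : (j : ℕ) ≠ n + 1 := by
        intro hcon
        have h1 : j = Fin.last (n + 1) := Fin.ext (by simpa using hcon)
        have h2 := σ.injective (h1.trans hlast.symm)
        have := congrArg Fin.val h2
        simp at this
      have hjlt : (j : ℕ) < n := by have := j.isLt; omega
      obtain ⟨k, rfl⟩ : ∃ k, n = k + 1 := ⟨n - 1, by omega⟩
      set a : Fin (k + 3) := ⟨k, by omega⟩ with ha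
      set b : Fin (k + 3) := ⟨k + 1, by omega⟩ with hb
      have hblast : (Fin.last (k + 1)).castSucc = b := by ext; simp [hb]
      set τ := Equiv.swap a b with hτ
      set σ₁ := Equiv.swap j a with hσ₁
      set σ₂ := τ * (σ₁ * σ) with hσ₂
      have hjb : j ≠ b := Fin.ne_of_val_ne hj1
      have hjlast : j ≠ Fin.last (k + 2) := Fin.ne_of_val_ne hj2
      have halast : a ≠ Fin.last (k + 2) := Fin.ne_of_val_ne (show k ≠ k + 2 by omega)
      have hblast' : b ≠ Fin.last (k + 2) := Fin.ne_of_val_ne (show k + 1 ≠ k + 2 by omega)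
      have hab : a ≠ b := Fin.ne_of_val_ne (show k ≠ k + 1 by omega)
      have hσ₁last : σ₁ (Fin.last (k + 2)) = Fin.last (k + 2) :=
        Equiv.swap_apply_of_ne_of_ne (Ne.symm hjlast) (Ne.symm halast)
      have hσ₁b : σ₁ b = b := Equiv.swap_apply_of_ne_of_ne (Ne.symm hjb) (Ne.symm hab)
      have hτlast : τ (Fin.last (k + 2)) = Fin.last (k + 2) :=
        Equiv.swap_apply_of_ne_of_ne (Ne.symm halast) (Ne.symm hblast')
      have hσ₂last : σ₂ (Fin.last (k + 2)) = Fin.last (k + 2) := by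
        simp only [hσ₂, Equiv.Perm.mul_apply, hlast, hσ₁last, hτlast]
      have hσ₂b : σ₂ b = b := by
        have hσb : σ b = j := by rw [← hblast, ← hj]
        simp only [hσ₂, Equiv.Perm.mul_apply, hσb, hσ₁, Equiv.swap_apply_left, hτ,
          Equiv.swap_apply_left]
      have hdecomp : s ∘ σ = ((s ∘ σ₁) ∘ τ) ∘ σ₂ := by
        funext i
        simp only [Function.comp_apply, hσ₂, Equiv.Perm.mul_apply, hσ₁, hτ]
        rw [Equiv.swap_apply_self, Equiv.swap_apply_self]
      rw [hdecomp]
      rw [caseA σ₂ hσ₂last (by rw [hblast]; exact hσ₂b) (((s ∘ σ₁) ∘ τ))]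
      rw [show ((s ∘ σ₁) ∘ τ) = ((s ∘ σ₁) ∘ (Equiv.swap (⟨k, by omega⟩ : Fin (k + 3)) ⟨k + 1, by omega⟩)) from rfl]
      rw [keyB op hRC k (s ∘ σ₁)]
      exact caseA σ₁ hσ₁last (by rw [hblast]; exact hσ₁b) s

end Aux

/-- In an RC-system, `Ωₙ` is invariant under any permutation of its first
`n−1` entries: `Ωₙ(s_{π(1)},…,s_{π(n−1)}, sₙ) = Ωₙ(s₁,…,sₙ)`. -/
theorem statement3 {S : Type*} (op : S → S → S) (hRC : RCLaw op) :
    ∀ (n : ℕ) (s : Fin (n + 1) → S) (π : Equiv.Perm (Fin n)),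
      OmegaFin op n (Fin.snoc (fun j : Fin n => s ((π j).castSucc)) (s (Fin.last n))) =
        OmegaFin op n s := by
  intro n s π
  set σ : Equiv.Perm (Fin (n + 1)) :=
    (finSuccEquivLast.trans π.optionCongr).trans finSuccEquivLast.symm with hσdef
  have hσlast : σ (Fin.last n) = Fin.last n := by simp [hσdef]
  have hfun : (Fin.snoc (fun j : Fin n => s ((π j).castSucc)) (s (Fin.last n)) :
      Fin (n + 1) → S) = s ∘ σ := by
    funext i
    refine Fin.lastCases ?_ ?_ i
    · simp [hσdef]
    · intro j
      simp [hσdef, Fin.snoc_castSucc]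
  rw [hfun]
  exact key op hRC n σ hσlast s
end

section
/- Let (S,∘) be an RC-quasigroup and s₁,…,sₙ elements of S. Then: (1) the map s ↦ Ω_{n+1}(s₁,…,sₙ,s) is a bijection of S onto itself; (2) there exist r₁,…,rₙ in S satisfying Ωᵢ(r₁,…,rᵢ) = sᵢ for 1 ≤ i ≤ n; (3) setting s̃ᵢ = Ωₙ(s₁,…,ŝᵢ,…,sₙ,sᵢ) (the i-th entry omitted from the list and placed last), for all i,j the relations sᵢ = s_j and s̃ᵢ = s̃_j are equivalent. -/
section Aux
variable {S : Type*} (op : S → S → S)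

lemma omega_snoc (n : ℕ) (t : Fin (n + 1) → S) (y : S) :
    OmegaFin op (n + 1) (Fin.snoc t y) =
      op (OmegaFin op n t) (OmegaFin op n (Fin.snoc (Fin.init t) y)) := by
  show op _ _ = _
  congr 1
  · congr 1; funext i; exact Fin.snoc_castSucc _ _ _
  · congr 1; funext i
    induction i using Fin.lastCases with
    | last => simp
    | cast i0 =>
      have h1 : (i0 : ℕ) ≠ n := Nat.ne_of_lt i0.isLt
      simp [h1, Fin.init]

lemma omega_swap_last (hRC : RCLaw op) (n : ℕ) (u : Fin n → S) (a b y : S) :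
    OmegaFin op (n + 2) (Fin.snoc (Fin.snoc (Fin.snoc u a) b) y) =
      OmegaFin op (n + 2) (Fin.snoc (Fin.snoc (Fin.snoc u b) a) y) := by
  rw [omega_snoc, omega_snoc, Fin.init_snoc, Fin.init_snoc,
    omega_snoc, omega_snoc, omega_snoc, omega_snoc,
    Fin.init_snoc, Fin.init_snoc, Fin.init_snoc, Fin.init_snoc]
  exact hRC _ _ _

lemma exists_perm_comp {m N : ℕ} (e₁ e₂ : Fin m → Fin N)
    (h₁ : Function.Injective e₁)
    (hr : Set.range e₁ = Set.range e₂) :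
    ∃ σ : Equiv.Perm (Fin m), e₂ ∘ σ = e₁ := by
  have h : ∀ k, ∃ l, e₂ l = e₁ k := fun k => by
    have : e₁ k ∈ Set.range e₂ := hr ▸ Set.mem_range_self k
    exact this
  choose f hf using h
  have hfinj : Function.Injective f := fun a b hab => h₁ (by rw [← hf, ← hf, hab])
  exact ⟨Equiv.ofBijective f (Finite.injective_iff_bijective.mp hfinj),
    funext fun k => hf k⟩

lemma omega_perm (hRC : RCLaw op) :
    ∀ (n : ℕ) (σ : Equiv.Perm (Fin n)) (t : Fin n → S) (y : S),
      OmegaFin op n (Fin.snoc (t ∘ σ) y) = OmegaFin op n (Fin.snoc t y) := by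
  intro n
  induction n with
  | zero =>
    intro σ t y
    have : t ∘ σ = t := funext fun i => i.elim0
    rw [this]
  | succ n IH =>
    have hfix : ∀ (τ : Equiv.Perm (Fin (n + 1))), τ (Fin.last n) = Fin.last n →
        ∀ (u : Fin (n + 1) → S) (y : S),
        OmegaFin op (n + 1) (Fin.snoc (u ∘ τ) y) = OmegaFin op (n + 1) (Fin.snoc u y) := by
      intro τ hτ u y
      have hne : ∀ i : Fin n, τ i.castSucc ≠ Fin.last n := by
        intro i h
        have := τ.injective (h.trans hτ.symm)
        exact (Fin.castSucc_lt_last i).ne this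
      have hfinj : Function.Injective (fun i : Fin n => (τ i.castSucc).castPred (hne i)) := by
        intro a b hab
        have hab2 : (τ a.castSucc).castPred (hne a) = (τ b.castSucc).castPred (hne b) := hab
        have hab' := congrArg Fin.castSucc hab2
        rw [Fin.castSucc_castPred, Fin.castSucc_castPred] at hab'
        exact Fin.castSucc_injective _ (τ.injective hab')
      set σ0 : Equiv.Perm (Fin n) :=
        Equiv.ofBijective _ (Finite.injective_iff_bijective.mp hfinj) with hσ0
      have hσ0app : ∀ i : Fin n, (σ0 i).castSucc = τ i.castSucc := fun i =>
        Fin.castSucc_castPred _ (hne i)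
      have h1 : u ∘ τ = Fin.snoc (Fin.init u ∘ σ0) (u (Fin.last n)) := by
        funext i
        induction i using Fin.lastCases with
        | last => simp [hτ]
        | cast i0 =>
          rw [Fin.snoc_castSucc]
          show u (τ i0.castSucc) = u (σ0 i0).castSucc
          rw [hσ0app]
      have h2 : Fin.init (u ∘ τ) = Fin.init u ∘ σ0 := by
        rw [h1, Fin.init_snoc]
      rw [omega_snoc, omega_snoc, h2, h1, IH σ0 (Fin.init u) y]
      congr 1
      rw [IH σ0 (Fin.init u) (u (Fin.last n)), Fin.snoc_init_self]
    have hswap : ∀ (k : Fin (n + 1)) (u : Fin (n + 1) → S) (y : S),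
        OmegaFin op (n + 1) (Fin.snoc (u ∘ Equiv.swap k (Fin.last n)) y)
          = OmegaFin op (n + 1) (Fin.snoc u y) := by
      intro k u y
      rcases eq_or_ne k (Fin.last n) with hk | hk
      · subst hk
        have : u ∘ Equiv.swap (Fin.last n) (Fin.last n) = u := by
          funext i; simp [Equiv.swap_self]
        rw [this]
      · obtain ⟨k0, rfl⟩ : ∃ k0 : Fin n, k0.castSucc = k :=
          ⟨k.castPred hk, Fin.castSucc_castPred _ _⟩
        have hn : n ≠ 0 := fun h => (h ▸ k0).elim0
        obtain ⟨m, rfl⟩ : ∃ m, n = m + 1 := ⟨n - 1, by omega⟩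
        have hpl : (Fin.last m).castSucc ≠ Fin.last (m + 1) := (Fin.castSucc_lt_last _).ne
        have hadj : ∀ (u : Fin (m + 2) → S) (y : S),
            OmegaFin op (m + 2)
              (Fin.snoc (u ∘ Equiv.swap (Fin.last m).castSucc (Fin.last (m + 1))) y)
              = OmegaFin op (m + 2) (Fin.snoc u y) := by
          intro u y
          have hu : u ∘ Equiv.swap (Fin.last m).castSucc (Fin.last (m + 1))
              = Fin.snoc (Fin.snoc (Fin.init (Fin.init u)) (u (Fin.last (m + 1))))
                  (u (Fin.last m).castSucc) := by
            funext i
            induction i using Fin.lastCases with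
            | last =>
              show u (Equiv.swap _ _ (Fin.last (m + 1))) = _
              rw [Equiv.swap_apply_right, Fin.snoc_last]
            | cast i0 =>
              induction i0 using Fin.lastCases with
              | last =>
                show u (Equiv.swap _ _ (Fin.last m).castSucc) = _
                rw [Equiv.swap_apply_left, Fin.snoc_castSucc, Fin.snoc_last]
              | cast i1 =>
                have h1 : i1.castSucc.castSucc ≠ (Fin.last m).castSucc := by
                  intro h
                  exact (Fin.castSucc_lt_last i1).ne (Fin.castSucc_injective _ h)
                have h2 : i1.castSucc.castSucc ≠ Fin.last (m + 1) :=
                  (Fin.castSucc_lt_last _).ne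
                show u (Equiv.swap _ _ i1.castSucc.castSucc) = _
                rw [Equiv.swap_apply_of_ne_of_ne h1 h2, Fin.snoc_castSucc, Fin.snoc_castSucc]
                rfl
          rw [hu, omega_swap_last op hRC m _ _ _ _]
          have huu : Fin.snoc (Fin.snoc (Fin.init (Fin.init u)) (u (Fin.last m).castSucc))
              (u (Fin.last (m + 1))) = u := by
            rw [show u (Fin.last m).castSucc = Fin.init u (Fin.last m) from rfl,
              Fin.snoc_init_self, Fin.snoc_init_self]
          rw [huu]
        rcases eq_or_ne k0 (Fin.last m) with hk0 | hk0
        · subst hk0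
          exact hadj u y
        · have hkp : k0.castSucc ≠ (Fin.last m).castSucc :=
            fun h => hk0 (Fin.castSucc_injective _ h)
          have hkl : k0.castSucc ≠ Fin.last (m + 1) := (Fin.castSucc_lt_last _).ne
          have hfun : u ∘ Equiv.swap k0.castSucc (Fin.last (m + 1)) =
              (((u ∘ Equiv.swap (Fin.last m).castSucc (Fin.last (m + 1)))
                ∘ Equiv.swap k0.castSucc (Fin.last m).castSucc)
                ∘ Equiv.swap (Fin.last m).castSucc (Fin.last (m + 1))) := by
            funext i
            simp only [Function.comp_apply]
            rcases eq_or_ne i k0.castSucc with rfl | h1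
            · simp [Equiv.swap_apply_def, hkp, hkl, hpl,
                Ne.symm hkp, Ne.symm hkl, Ne.symm hpl]
            · rcases eq_or_ne i (Fin.last (m + 1)) with rfl | h2
              · simp [Equiv.swap_apply_def, hkp, hkl, hpl,
                  Ne.symm hkp, Ne.symm hkl, Ne.symm hpl]
              · rcases eq_or_ne i ((Fin.last m).castSucc) with rfl | h3
                · simp [Equiv.swap_apply_def, hkp, hkl, hpl,
                    Ne.symm hkp, Ne.symm hkl, Ne.symm hpl]
                · simp [Equiv.swap_apply_def, h1, h2, h3]
          have hτl : Equiv.swap k0.castSucc (Fin.last m).castSucc (Fin.last (m + 1))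
              = Fin.last (m + 1) :=
            Equiv.swap_apply_of_ne_of_ne (Ne.symm hkl) (Ne.symm hpl)
          rw [hfun, hadj, hfix _ hτl, hadj]
    intro σ t y
    have hτl : (σ.trans (Equiv.swap (σ (Fin.last n)) (Fin.last n))) (Fin.last n)
        = Fin.last n := by
      simp [Equiv.swap_apply_left]
    have h1 : t ∘ σ = (t ∘ Equiv.swap (σ (Fin.last n)) (Fin.last n))
        ∘ (σ.trans (Equiv.swap (σ (Fin.last n)) (Fin.last n))) := by
      funext i
      simp [Equiv.swap_apply_self]
    rw [h1, hfix _ hτl, hswap]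

lemma omega_bij (hlb : ∀ s : S, Function.Bijective (op s)) :
    ∀ (n : ℕ) (s : Fin n → S),
      Function.Bijective fun x : S => OmegaFin op n (Fin.snoc s x) := by
  intro n
  induction n with
  | zero =>
    intro s
    have h0 : ∀ x : S, OmegaFin op 0 (Fin.snoc s x) = x := by
      intro x
      show (Fin.snoc s x : Fin 1 → S) 0 = x
      rw [show (0 : Fin 1) = Fin.last 0 from rfl, Fin.snoc_last]
    have h2 : (fun x : S => OmegaFin op 0 (Fin.snoc s x)) = id := funext h0
    rw [h2]; exact Function.bijective_id
  | succ n IH =>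
    intro s
    have h2 : (fun x : S => OmegaFin op (n + 1) (Fin.snoc s x))
        = (op (OmegaFin op n s)) ∘ (fun x : S => OmegaFin op n (Fin.snoc (Fin.init s) x)) := by
      funext x
      exact omega_snoc op n s x
    rw [h2]
    exact (hlb _).comp (IH _)

lemma omega_part2 (hlb : ∀ s : S, Function.Bijective (op s)) :
    ∀ (n : ℕ) (s : Fin n → S), ∃ r : Fin n → S,
      ∀ i : Fin n, OmegaFin op i.val (fun j : Fin (i.val + 1) => r (Fin.castLE i.isLt j)) = s i := by
  intro n
  induction n with
  | zero => exact fun s => ⟨Fin.elim0, fun i => i.elim0⟩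
  | succ n IH =>
    intro s
    obtain ⟨r', hr'⟩ := IH (fun i => s i.castSucc)
    obtain ⟨x, hx⟩ := (omega_bij op hlb n r').surjective (s (Fin.last n))
    refine ⟨Fin.snoc r' x, fun i => ?_⟩
    induction i using Fin.lastCases with
    | last =>
      have hfun : (fun j : Fin ((Fin.last n).val + 1) =>
          (Fin.snoc r' x : Fin (n + 1) → S) (Fin.castLE (Fin.last n).isLt j))
          = (Fin.snoc r' x : Fin (n + 1) → S) := by
        funext j
        congr 1
      rw [hfun]
      exact hx
    | cast i0 =>
      show OmegaFin op i0.val (fun j : Fin (i0.val + 1) =>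
          (Fin.snoc r' x : Fin (n + 1) → S) (Fin.castLE (i0.castSucc).isLt j)) = s i0.castSucc
      have hfun : (fun j : Fin (i0.val + 1) =>
          (Fin.snoc r' x : Fin (n + 1) → S) (Fin.castLE (i0.castSucc).isLt j))
          = (fun j : Fin (i0.val + 1) => r' (Fin.castLE i0.isLt j)) := by
        funext j
        have h3 : Fin.castLE (i0.castSucc).isLt j = (Fin.castLE i0.isLt j).castSucc :=
          Fin.ext rfl
        rw [h3, Fin.snoc_castSucc]
      rw [hfun]
      exact hr' i0

lemma part3_decomp (hRC : RCLaw op) (m : ℕ) (s : Fin (m + 2) → S) (i j : Fin (m + 2))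
    (hij : i ≠ j) :
    ∃ e : Fin m → Fin (m + 2),
      Function.Injective e ∧
      Set.range e = {x | x ≠ i ∧ x ≠ j} ∧
      ∀ c : S,
        OmegaFin op (m + 1) (Fin.snoc (fun q : Fin (m + 1) => s (i.succAbove q)) c)
          = op (OmegaFin op m (Fin.snoc (s ∘ e) (s j)))
              (OmegaFin op m (Fin.snoc (s ∘ e) c)) := by
  obtain ⟨p, hp⟩ := Fin.exists_succAbove_eq (Ne.symm hij)
  refine ⟨fun q => i.succAbove (p.succAbove q), ?_, ?_, ?_⟩
  · intro a b hab
    exact Fin.succAbove_right_injective (Fin.succAbove_right_injective hab)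
  · ext x
    constructor
    · rintro ⟨q, rfl⟩
      refine ⟨Fin.succAbove_ne i _, fun h => Fin.succAbove_ne p q ?_⟩
      exact Fin.succAbove_right_injective (h.trans hp.symm)
    · rintro ⟨hxi, hxj⟩
      obtain ⟨z, hz⟩ := Fin.exists_succAbove_eq hxi
      have hzp : z ≠ p := fun h => hxj (by rw [← hz, h, hp])
      obtain ⟨q, hq⟩ := Fin.exists_succAbove_eq hzp
      refine ⟨q, ?_⟩
      show i.succAbove (p.succAbove q) = x
      rw [hq, hz]
  · intro c
    set e : Fin m → Fin (m + 2) := fun q => i.succAbove (p.succAbove q) with he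
    set E : Fin (m + 1) → Fin (m + 2) := Fin.snoc e j with hE
    have hElast : E (Fin.last m) = j := Fin.snoc_last _ _
    have hEcast : ∀ q : Fin m, E q.castSucc = e q := fun q => Fin.snoc_castSucc _ _ _
    have hrange : Set.range i.succAbove = Set.range E := by
      rw [Fin.range_succAbove]
      ext x
      constructor
      · intro hx
        rcases eq_or_ne x j with rfl | hxj
        · exact ⟨Fin.last m, hElast⟩
        · have hxi : x ≠ i := hx
          obtain ⟨z, hz⟩ := Fin.exists_succAbove_eq hxi
          have hzp : z ≠ p := fun h => hxj (by rw [← hz, h, hp])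
          obtain ⟨q, hq⟩ := Fin.exists_succAbove_eq hzp
          refine ⟨q.castSucc, ?_⟩
          rw [hEcast]
          show i.succAbove (p.succAbove q) = x
          rw [hq, hz]
      · rintro ⟨q, rfl⟩
        induction q using Fin.lastCases with
        | last => rw [hElast]; exact Ne.symm hij
        | cast q0 => rw [hEcast]; exact Fin.succAbove_ne i _
    obtain ⟨σ, hσ⟩ := exists_perm_comp i.succAbove E Fin.succAbove_right_injective hrange
    have hsE : s ∘ E = Fin.snoc (s ∘ e) (s j) := by
      funext q
      induction q using Fin.lastCases with
      | last =>
        show s (E (Fin.last m)) = _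
        rw [hElast, Fin.snoc_last]
      | cast q0 =>
        show s (E q0.castSucc) = _
        rw [hEcast, Fin.snoc_castSucc]
        rfl
    have hfun : (fun q : Fin (m + 1) => s (i.succAbove q)) = (s ∘ E) ∘ σ := by
      funext q
      show s (i.succAbove q) = s (E (σ q))
      have h5 := congrFun hσ q
      simp only [Function.comp_apply] at h5
      rw [h5]
    rw [hfun, omega_perm op hRC (m + 1) σ (s ∘ E) c, hsE,
      omega_snoc op m (Fin.snoc (s ∘ e) (s j)) c, Fin.init_snoc]

lemma omega_part3 (hRC : RCLaw op) (hlb : ∀ s : S, Function.Bijective (op s)) :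
    ∀ (n : ℕ) (s : Fin (n + 1) → S) (i j : Fin (n + 1)),
      s i = s j ↔
        OmegaFin op n (Fin.snoc (fun m : Fin n => s (i.succAbove m)) (s i)) =
          OmegaFin op n (Fin.snoc (fun m : Fin n => s (j.succAbove m)) (s j)) := by
  intro n s i j
  rcases eq_or_ne i j with rfl | hij
  · simp
  cases n with
  | zero => exact absurd (Fin.ext (by omega)) hij
  | succ m =>
    obtain ⟨ei, hei_inj, hei_range, hei⟩ := part3_decomp op hRC m s i j hij
    obtain ⟨ej, hej_inj, hej_range, hej⟩ := part3_decomp op hRC m s j i (Ne.symm hij)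
    have hrr : Set.range ei = Set.range ej := by
      rw [hei_range, hej_range]
      ext x
      exact and_comm
    obtain ⟨σ, hσ⟩ := exists_perm_comp ei ej hei_inj hrr
    have hperm : ∀ c : S, OmegaFin op m (Fin.snoc (s ∘ ei) c)
        = OmegaFin op m (Fin.snoc (s ∘ ej) c) := by
      intro c
      have h1 : s ∘ ei = (s ∘ ej) ∘ σ := by
        funext q
        show s (ei q) = s (ej (σ q))
        have h5 := congrFun hσ q
        simp only [Function.comp_apply] at h5
        rw [h5]
      rw [h1, omega_perm op hRC m σ (s ∘ ej) c]
    set X := OmegaFin op m (Fin.snoc (s ∘ ej) (s j)) with hX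
    set Y := OmegaFin op m (Fin.snoc (s ∘ ej) (s i)) with hY
    have hi2 : OmegaFin op (m + 1) (Fin.snoc (fun q : Fin (m + 1) => s (i.succAbove q)) (s i))
        = op X Y := by
      rw [hei (s i), hperm (s j), hperm (s i)]
    have hj2 : OmegaFin op (m + 1) (Fin.snoc (fun q : Fin (m + 1) => s (j.succAbove q)) (s j))
        = op Y X := by
      rw [hej (s j)]
    rw [hi2, hj2]
    constructor
    · intro h
      have hXY : X = Y := by rw [hX, hY, h]
      rw [hXY]
    · intro h
      have h1 : ∀ z : S, op X z = op Y z := by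
        intro z
        have h2 := hRC X Y z
        rw [h] at h2
        exact (hlb (op Y X)).injective h2
      have h3 : op X X = op X Y := by
        rw [h1 X, ← h]
      have hXY : X = Y := (hlb X).injective h3
      have h4 : OmegaFin op m (Fin.snoc (s ∘ ej) (s j))
          = OmegaFin op m (Fin.snoc (s ∘ ej) (s i)) := hXY
      exact ((omega_bij op hlb m (s ∘ ej)).injective h4).symm

end Aux

/-- In an RC-quasigroup: (1) `s ↦ Ω_{n+1}(s₁,…,sₙ,s)` is a bijection of `S`;
(2) every tuple `(s₁,…,sₙ)` is of the form `(Ω₁(r₁), Ω₂(r₁,r₂),…,Ωₙ(r₁,…,rₙ))`;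
(3) with `s̃ᵢ = Ωₙ(s₁,…,ŝᵢ,…,sₙ,sᵢ)`, the relations `sᵢ = s_j` and `s̃ᵢ = s̃_j` are
equivalent. -/
theorem statement4 {S : Type*} (op : S → S → S)
    (hRC : RCLaw op) (hlb : ∀ s : S, Function.Bijective (op s)) :
    (∀ (n : ℕ) (s : Fin n → S), Function.Bijective fun x : S => OmegaFin op n (Fin.snoc s x)) ∧
    (∀ (n : ℕ) (s : Fin n → S), ∃ r : Fin n → S,
      ∀ i : Fin n, OmegaFin op i.val (fun j : Fin (i.val + 1) => r (Fin.castLE i.isLt j)) = s i) ∧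
    (∀ (n : ℕ) (s : Fin (n + 1) → S) (i j : Fin (n + 1)),
      s i = s j ↔
        OmegaFin op n (Fin.snoc (fun m : Fin n => s (i.succAbove m)) (s i)) =
          OmegaFin op n (Fin.snoc (fun m : Fin n => s (j.succAbove m)) (s j))) :=
  ⟨omega_bij op hlb, omega_part2 op hlb, omega_part3 op hRC hlb⟩
end

section
/- Let (S,∘) be an RC-system, M a monoid, and ι : S → M a map satisfying ι(s)·ι(s∘t) = ι(t)·ι(t∘s) for all s,t in S. Then the evaluation of Πₙ in M is a symmetric function: for all s₁,…,sₙ in S and every permutation π of {1,…,n}, Πₙ(s_{π(1)},…,s_{π(n)}) = Πₙ(s₁,…,sₙ) in M, where elements of S occurring in the products are mapped into M via ι. -/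
/-- `Πₙ(x₁,…,xₙ) = ι(Ω₁(x₁))·ι(Ω₂(x₁,x₂))·…·ι(Ωₙ(x₁,…,xₙ))`, computed in the monoid `M`. -/
def PiFin {S M : Type*} [Monoid M] (op : S → S → S) (ι : S → M) (n : ℕ) (x : Fin n → S) : M :=
  ((List.finRange n).map fun i =>
    ι (OmegaFin op i.val fun j : Fin (i.val + 1) => x (Fin.castLE i.isLt j))).prod

/-- `OmegaList op l y` computes `Ω` of the tuple whose last entry is `y` and whose earlier
entries, read in reverse order, form `l`. -/
def OmegaList {S : Type*} (op : S → S → S) : List S → S → S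
  | [], y => y
  | a :: l, y => op (OmegaList op l a) (OmegaList op l y)

theorem OmegaList_perm {S : Type*} {op : S → S → S} (hRC : RCLaw op) :
    ∀ {l l' : List S}, l.Perm l' → ∀ y, OmegaList op l y = OmegaList op l' y := by
  intro l l' h
  induction h with
  | nil => intro y; rfl
  | cons a _ ih => intro y; simp [OmegaList, ih]
  | swap a b l =>
      intro y
      simp only [OmegaList]
      exact (hRC (OmegaList op l b) (OmegaList op l a) (OmegaList op l y)).symm
  | trans _ _ ih1 ih2 => intro y; rw [ih1, ih2]

/-- `PiList ι r` is `Πₙ` of the tuple whose entries, read in reverse order, form `r`. -/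
def PiList {S M : Type*} [Monoid M] (op : S → S → S) (ι : S → M) : List S → M
  | [] => 1
  | a :: r => PiList op ι r * ι (OmegaList op r a)

theorem PiList_perm {S M : Type*} [Monoid M] {op : S → S → S} (hRC : RCLaw op)
    {ι : S → M} (hι : ∀ s t : S, ι s * ι (op s t) = ι t * ι (op t s)) :
    ∀ {r r' : List S}, r.Perm r' → PiList op ι r = PiList op ι r' := by
  intro r r' h
  induction h with
  | nil => rfl
  | cons a p ih => simp [PiList, ih, OmegaList_perm hRC p]
  | swap a b l =>
      simp only [PiList, OmegaList, mul_assoc]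
      rw [hι (OmegaList op l b) (OmegaList op l a)]
  | trans _ _ ih1 ih2 => rw [ih1, ih2]

theorem OmegaFin_eq_omegaList {S : Type*} (op : S → S → S) :
    ∀ (n : ℕ) (x : Fin (n + 1) → S),
      OmegaFin op n x =
        OmegaList op (List.ofFn fun i : Fin n => x i.castSucc).reverse (x (Fin.last n)) := by
  intro n
  induction n with
  | zero => intro x; rfl
  | succ n ih =>
      intro x
      have hlist : (List.ofFn fun i : Fin (n + 1) => x i.castSucc).reverse =
          x (Fin.last n).castSucc :: (List.ofFn fun i : Fin n => x i.castSucc.castSucc).reverse := by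
        rw [List.ofFn_succ' fun i : Fin (n + 1) => x i.castSucc]
        simp
      rw [hlist]
      simp only [OmegaFin, OmegaList]
      congr 1
      · rw [ih fun i => x i.castSucc]
      · rw [ih fun i : Fin (n + 1) => if (i : ℕ) = n then x (Fin.last (n + 1)) else x i.castSucc]
        congr 1
        · exact congrArg _ (congrArg List.ofFn (funext fun i => if_neg (Nat.ne_of_lt i.isLt)))
        · exact if_pos rfl

theorem PiFin_eq_piList {S M : Type*} [Monoid M] (op : S → S → S) (ι : S → M) :
    ∀ (n : ℕ) (s : Fin n → S), PiFin op ι n s = PiList op ι (List.ofFn s).reverse := by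
  intro n
  induction n with
  | zero => intro s; rfl
  | succ n ih =>
      intro s
      have hlist : (List.ofFn s).reverse =
          s (Fin.last n) :: (List.ofFn fun i : Fin n => s i.castSucc).reverse := by
        rw [List.ofFn_succ' s]; simp
      rw [hlist]
      simp only [PiList]
      have hstep : PiFin op ι (n + 1) s =
          PiFin op ι n (fun i => s i.castSucc) * ι (OmegaFin op n s) := by
        simp only [PiFin, List.finRange_succ_last, List.map_append, List.map_map,
          List.prod_append, List.map_cons, List.map_nil, List.prod_cons, List.prod_nil, mul_one]
        rfl
      rw [hstep, ih fun i => s i.castSucc, OmegaFin_eq_omegaList]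

/-- If `(S,∘)` is an RC-system and `ι : S → M` satisfies
`ι(s)·ι(s∘t) = ι(t)·ι(t∘s)` for all `s,t`, then `Πₙ` evaluated in `M` is a symmetric function
of its `n` arguments. -/
theorem statement5 {S M : Type*} [Monoid M] (op : S → S → S) (hRC : RCLaw op)
    (ι : S → M) (hι : ∀ s t : S, ι s * ι (op s t) = ι t * ι (op t s)) :
    ∀ (n : ℕ) (s : Fin n → S) (π : Equiv.Perm (Fin n)),
      PiFin op ι n (fun i => s (π i)) = PiFin op ι n s := by
  intro n s π
  rw [PiFin_eq_piList, PiFin_eq_piList]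
  exact PiList_perm hRC hι ((List.reverse_perm _).trans ((π.ofFn_comp_perm s).trans (List.reverse_perm _).symm))
end

section
/- Let (S,∘,∘̃) be an RLC-system, M a monoid, and ι : S → M a map satisfying ι(s)·ι(s∘t) = ι(t)·ι(t∘s) for all s,t in S. Then for all s₁,…,sₙ in S the equality Πₙ(s₁,…,sₙ) = Π̃ₙ(s̃₁,…,s̃ₙ) holds in M, where s̃ᵢ = Ωₙ(s₁,…,ŝᵢ,…,sₙ,sᵢ) (the i-th entry omitted from the list and placed last). -/
/-- The left-cyclic law: `(z∘̃x)∘̃(y∘̃x) = (z∘̃y)∘̃(x∘̃y)`. -/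
def LCLaw {S : Type*} (opL : S → S → S) : Prop :=
  ∀ x y z : S, opL (opL z x) (opL y x) = opL (opL z y) (opL x y)

/-- The monomials `Ω̃ₙ`: `OmegaTFin opL n x` is `Ω̃_{n+1}(x₀,…,xₙ)`, defined by `Ω̃₁(x₁) = x₁`
and `Ω̃ₙ(x₁,…,xₙ) = Ω̃_{n−1}(x₁,x₃,…,xₙ) ∘̃ Ω̃_{n−1}(x₂,…,xₙ)`. -/
def OmegaTFin {S : Type*} (opL : S → S → S) : (n : ℕ) → (Fin (n + 1) → S) → S
  | 0, x => x 0
  | n + 1, x =>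
      opL (OmegaTFin opL n fun i => x ((1 : Fin (n + 2)).succAbove i))
          (OmegaTFin opL n fun i => x i.succ)

/-- `Π̃ₙ(x₁,…,xₙ) = ι(Ω̃ₙ(x₁,…,xₙ))·ι(Ω̃_{n−1}(x₂,…,xₙ))·…·ι(Ω̃₁(xₙ))`, computed in `M`. -/
def PiTFin {S M : Type*} [Monoid M] (opL : S → S → S) (ι : S → M) :
    (n : ℕ) → (Fin n → S) → M
  | 0, _ => 1
  | n + 1, x => ι (OmegaTFin opL n x) * PiTFin opL ι n fun i => x i.succ

/-!
Both products peel off their first factor. Since `Ω` of a tuple starting with `s₀` is `Ω` of the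
tuple `(s₀∘sᵢ)ᵢ`, we get `Πₙ₊₁(s) = ι(s₀)·Πₙ(s₀∘s₁,…,s₀∘sₙ)`, and the tail `(s̃₁,…,s̃ₙ)` is the
`s̃` of `(s₀∘s₁,…,s₀∘sₙ)`. Everything thus reduces to `Ω̃(s̃) = s₀`, by induction: the right-cyclic
law makes `Ω` symmetric in its first two arguments, so `s̃` with `s̃₁` removed is the tail of the
`s̃` of `s` with `s₀, s₁` exchanged. The two halves of `Ω̃(s̃)` are therefore `s₁∘s₀` and `s₀∘s₁`,
and involutivity gives `(s₁∘s₀)∘̃(s₀∘s₁) = s₀`.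
-/

theorem Fin.one_succAbove_eq_swap_succ {n : ℕ} (i : Fin (n + 1)) :
    (1 : Fin (n + 2)).succAbove i = Equiv.swap 0 1 i.succ := by
  cases i using Fin.cases with
  | zero => simp
  | succ i =>
    rw [Equiv.swap_apply_of_ne_of_ne (Fin.succ_ne_zero _) (Fin.succ_succ_ne_one i)]
    simp [Fin.succAbove_of_le_castSucc, Fin.le_def]

section

variable {S : Type*} (op opL : S → S → S)

theorem OmegaFin_succ_eq_op_zero :
    ∀ (n : ℕ) (x : Fin (n + 2) → S),
      OmegaFin op (n + 1) x = OmegaFin op n fun i => op (x 0) (x i.succ)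
  | 0, x => rfl
  | n + 1, x => by
    rw [OmegaFin, OmegaFin_succ_eq_op_zero n, OmegaFin_succ_eq_op_zero n, OmegaFin]
    congr 2
    funext i
    by_cases hi : (i : ℕ) = n <;> simp [hi, Fin.succ_castSucc, -Fin.castSucc_succ]

theorem OmegaFin_comp_swap_zero_one (hRC : RCLaw op) (n : ℕ) (x : Fin (n + 3) → S) :
    OmegaFin op (n + 2) (x ∘ Equiv.swap 0 1) = OmegaFin op (n + 2) x := by
  simp only [OmegaFin_succ_eq_op_zero]
  congr 1
  funext i
  simp [Equiv.swap_apply_of_ne_of_ne, Fin.succ_ne_zero, Fin.succ_succ_ne_one]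
  exact hRC (x 1) (x 0) (x i.succ.succ)

theorem PiFin_succ {M : Type*} [Monoid M] (ι : S → M) (n : ℕ) (s : Fin (n + 1) → S) :
    PiFin op ι (n + 1) s = ι (s 0) * PiFin op ι n fun j => op (s 0) (s j.succ) := by
  rw [PiFin, List.finRange_succ, List.map_cons, List.prod_cons, List.map_map]
  congr 2
  exact List.map_congr_left fun i _ => congrArg ι (OmegaFin_succ_eq_op_zero op i _)

-- The paper's `s̃`, with `s̃ᵢ = Ωₙ₊₁(s₀,…,ŝᵢ,…,sₙ,sᵢ)`.
def tildeVec (n : ℕ) (s : Fin (n + 1) → S) (i : Fin (n + 1)) : S :=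
  OmegaFin op n (Fin.snoc (fun m : Fin n => s (i.succAbove m)) (s i))

theorem tildeVec_succ (n : ℕ) (s : Fin (n + 2) → S) (j : Fin (n + 1)) :
    tildeVec op (n + 1) s j.succ = tildeVec op n (fun k => op (s 0) (s k.succ)) j := by
  rw [tildeVec, tildeVec, OmegaFin_succ_eq_op_zero]
  congr 1
  funext k
  cases k using Fin.lastCases with
  | last => simp [Fin.succ_last]
  | cast k => simp [Fin.succ_castSucc, -Fin.castSucc_succ, Fin.succ_succAbove_succ]

theorem tildeVec_comp_swap_zero_one (hRC : RCLaw op) (n : ℕ) (s : Fin (n + 2) → S) :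
    tildeVec op (n + 1) (s ∘ Equiv.swap 0 1) = tildeVec op (n + 1) s ∘ Equiv.swap 0 1 := by
  have at_zero (s : Fin (n + 2) → S) :
      tildeVec op (n + 1) (s ∘ Equiv.swap 0 1) 0 = tildeVec op (n + 1) s 1 := by
    simp only [tildeVec, Function.comp_apply, Fin.zero_succAbove, ← Fin.one_succAbove_eq_swap_succ,
      Equiv.swap_apply_left]
  funext i
  rcases i.eq_zero_or_eq_succ with rfl | ⟨j, rfl⟩
  · simpa using at_zero s
  rcases j.eq_zero_or_eq_succ with rfl | ⟨k, rfl⟩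
  · simpa [Function.comp_def] using (at_zero (s ∘ Equiv.swap 0 1)).symm
  cases n with
  | zero => exact k.elim0
  | succ n =>
    set p : Fin (n + 3) := k.succ.succ
    have hp0 : p.succAbove 0 = 0 := Fin.succAbove_ne_zero_zero (Fin.succ_ne_zero _)
    have hp1 : p.succAbove 1 = 1 := by
      rw [Fin.succAbove_of_castSucc_lt] <;> simp [p, Fin.lt_def]
    have hp : Equiv.swap 0 1 p = p :=
      Equiv.swap_apply_of_ne_of_ne (Fin.succ_ne_zero _) (Fin.succ_succ_ne_one k)
    have swap_succAbove (m : Fin (n + 2)) :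
        Equiv.swap 0 1 (p.succAbove m) = p.succAbove (Equiv.swap 0 1 m) := by
      rw [← Fin.succAbove_right_injective.swap_apply, hp0, hp1]
    have swap_castSucc (m : Fin (n + 2)) :
        Equiv.swap 0 1 m.castSucc = (Equiv.swap 0 1 m).castSucc := by
      rw [← (Fin.castSucc_injective _).swap_apply, Fin.castSucc_zero, Fin.castSucc_one]
    simp only [tildeVec, Function.comp_apply, hp]
    rw [← OmegaFin_comp_swap_zero_one op hRC]
    congr 1
    funext m
    cases m using Fin.lastCases with
    | last => rw [Function.comp_apply, Equiv.swap_apply_of_ne_of_ne] <;> simp [Fin.ext_iff]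
    | cast m =>
      rw [Function.comp_apply, swap_castSucc, Fin.snoc_castSucc, Fin.snoc_castSucc, swap_succAbove,
        Equiv.swap_apply_self]

theorem OmegaTFin_tildeVec (hRC : RCLaw op) (hinv : ∀ x y : S, opL (op y x) (op x y) = x) :
    ∀ (n : ℕ) (s : Fin (n + 1) → S), OmegaTFin opL n (tildeVec op n s) = s 0
  | 0, s => rfl
  | n + 1, s => by
    have tail_eq (s : Fin (n + 2) → S) :
        (fun i => tildeVec op (n + 1) s i.succ) = tildeVec op n fun k => op (s 0) (s k.succ) :=
      funext (tildeVec_succ op n s)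
    have drop_one : (fun i => tildeVec op (n + 1) s ((1 : Fin (n + 2)).succAbove i)) =
        fun i => tildeVec op (n + 1) (s ∘ Equiv.swap 0 1) i.succ := by
      funext i
      rw [Fin.one_succAbove_eq_swap_succ, tildeVec_comp_swap_zero_one op hRC]
      rfl
    rw [OmegaTFin, drop_one, tail_eq, tail_eq, OmegaTFin_tildeVec hRC hinv n,
      OmegaTFin_tildeVec hRC hinv n]
    simpa using hinv (s 0) (s 1)

theorem PiFin_eq_PiTFin_tildeVec {M : Type*} [Monoid M] (hRC : RCLaw op)
    (hinv : ∀ x y : S, opL (op y x) (op x y) = x) (ι : S → M) :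
    ∀ (n : ℕ) (s : Fin (n + 1) → S), PiFin op ι (n + 1) s = PiTFin opL ι (n + 1) (tildeVec op n s)
  | 0, s => by rw [PiFin_succ, PiTFin, OmegaTFin_tildeVec op opL hRC hinv]; rfl
  | n + 1, s => by
    rw [PiFin_succ, PiTFin, OmegaTFin_tildeVec op opL hRC hinv,
      PiFin_eq_PiTFin_tildeVec hRC hinv ι n]
    congr 2
    exact (funext (tildeVec_succ op n s)).symm

end

theorem statement6_general {S M : Type*} [Monoid M] (op opL : S → S → S)
    (hRC : RCLaw op)
    (hinv : ∀ x y : S, opL (op y x) (op x y) = x ∧ op (opL y x) (opL x y) = x)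
    (ι : S → M) :
    ∀ (n : ℕ) (s : Fin (n + 1) → S),
      PiFin op ι (n + 1) s =
        PiTFin opL ι (n + 1) fun i : Fin (n + 1) =>
          OmegaFin op n (Fin.snoc (fun m : Fin n => s (i.succAbove m)) (s i)) :=
  PiFin_eq_PiTFin_tildeVec op opL hRC (fun x y => (hinv x y).1) ι

/-- If `(S,∘,∘̃)` is an RLC-system and `ι : S → M` satisfies
`ι(s)·ι(s∘t) = ι(t)·ι(t∘s)`, then `Πₙ(s₁,…,sₙ) = Π̃ₙ(s̃₁,…,s̃ₙ)` in `M`, where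
`s̃ᵢ = Ωₙ(s₁,…,ŝᵢ,…,sₙ,sᵢ)`. -/
theorem statement6 {S M : Type*} [Monoid M] (op opL : S → S → S)
    (hRC : RCLaw op) (hLC : LCLaw opL)
    (hinv : ∀ x y : S, opL (op y x) (op x y) = x ∧ op (opL y x) (opL x y) = x)
    (ι : S → M) (hι : ∀ s t : S, ι s * ι (op s t) = ι t * ι (op t s)) :
    ∀ (n : ℕ) (s : Fin (n + 1) → S),
      PiFin op ι (n + 1) s =
        PiTFin opL ι (n + 1) fun i : Fin (n + 1) =>
          OmegaFin op n (Fin.snoc (fun m : Fin n => s (i.succAbove m)) (s i)) :=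
  statement6_general op opL hRC hinv ι
end

section
/- Let (S,∘) be an RC-quasigroup and M its structure monoid. Then: (1) there is a length function on M, i.e., a monoid homomorphism λ : M → ℕ with λ(g) ≥ 1 for g ≠ 1 and λ(s) = 1 for each generator s in S; (2) M is left-cancellative; (3) any two elements of M admit a (unique) least common right-multiple and a (unique) greatest common left-divisor with respect to the left-divisibility relation; moreover, for distinct s,t in S, the right-lcm of s and t in M is s·(s∘t). -/
/-- The defining relations `s(s∘t) = t(t∘s)`, `s ≠ t`, of the structure monoid, as a relation
on the free monoid over `S`. -/
def rcRel {S : Type*} (op : S → S → S) : FreeMonoid S → FreeMonoid S → Prop :=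
  fun a b => ∃ s t : S, s ≠ t ∧
    a = FreeMonoid.of s * FreeMonoid.of (op s t) ∧ b = FreeMonoid.of t * FreeMonoid.of (op t s)

/-- The structure monoid of `(S,∘)`: the monoid presented by generators `S` and relations
`s(s∘t) = t(t∘s)` for `s ≠ t`, realized as the quotient of the free monoid on `S` by the
congruence generated by these relations. -/
abbrev StructureMonoid {S : Type*} (op : S → S → S) := (conGen (rcRel op)).Quotient

/-- The canonical generator of the structure monoid associated with `s ∈ S`. -/
def smGen {S : Type*} (op : S → S → S) (s : S) : StructureMonoid op :=
  (conGen (rcRel op)).mk' (FreeMonoid.of s)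
theorem existsUnique_lub_of_iff_le {M L : Type*} [SemilatticeSup L] (r : M → M → Prop)
    (e : M ≃ L) (he : ∀ a b, r a b ↔ e a ≤ e b) (f g : M) :
    ∃! h, (r f h ∧ r g h) ∧ ∀ k, r f k → r g k → r h k := by
  have hsup : r f (e.symm (e f ⊔ e g)) ∧ r g (e.symm (e f ⊔ e g)) := by simp [he]
  refine ⟨_, ⟨hsup, fun k hf hg => ?_⟩, fun h ⟨⟨hf, hg⟩, hmin⟩ => e.eq_symm_apply.2 ?_⟩
  · simpa [he] using sup_le ((he _ _).1 hf) ((he _ _).1 hg)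
  · exact le_antisymm (by simpa [he] using hmin _ hsup.1 hsup.2)
      (sup_le ((he _ _).1 hf) ((he _ _).1 hg))

namespace StructureMonoid

variable {S : Type*} {op : S → S → S}

theorem smGen_mul_smGen_op {s t : S} (h : s ≠ t) :
    smGen op s * smGen op (op s t) = smGen op t * smGen op (op t s) :=
  (Con.eq _).2 (ConGen.Rel.of _ _ ⟨s, t, h, rfl, rfl⟩)

@[elab_as_elim]
theorem induction_on {motive : StructureMonoid op → Prop} (m : StructureMonoid op)
    (one : motive 1) (smGen_mul : ∀ s m, motive m → motive (smGen op s * m)) : motive m := by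
  obtain ⟨w, rfl⟩ := (conGen (rcRel op)).mk'_surjective m
  induction w using FreeMonoid.inductionOn' with
  | one => exact one
  | of_mul s w ih =>
    rw [map_mul]
    exact smGen_mul s _ ih

section Lift

variable {N : Type*} [Monoid N] (g : S → N)
  (hg : ∀ s t, s ≠ t → g s * g (op s t) = g t * g (op t s))

def lift : StructureMonoid op →* N :=
  (conGen (rcRel op)).lift (FreeMonoid.lift g) <| Con.conGen_le.2 fun _ _ ⟨s, t, hst, ha, hb⟩ => by
    subst ha hb
    simpa using hg s t hst

@[simp]
theorem lift_smGen (s : S) : lift g hg (smGen op s) = g s := by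
  simp [lift, smGen]

end Lift

section RCQuasigroup

open Finsupp

attribute [local instance] comapSMul comapMulAction comapDistribMulAction

variable (hlb : ∀ s : S, Function.Bijective (op s))

noncomputable def opPerm (s : S) : Equiv.Perm S := Equiv.ofBijective (op s) (hlb s)

theorem opPerm_op_mul_opPerm (hRC : RCLaw op) (s t : S) :
    opPerm hlb (op s t) * opPerm hlb s = opPerm hlb (op t s) * opPerm hlb t :=
  Equiv.ext (hRC s t)

noncomputable def permRep (hRC : RCLaw op) : StructureMonoid op →* Equiv.Perm S :=
  lift (fun s => (opPerm hlb s)⁻¹) fun s t _ => by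
    rw [← mul_inv_rev, ← mul_inv_rev, opPerm_op_mul_opPerm hlb hRC]

theorem opPerm_inv_smul_op (s t : S) : (opPerm hlb s)⁻¹ • op s t = t :=
  inv_smul_smul (opPerm hlb s) t

noncomputable def affineGen (s : S) : Function.End (S →₀ ℕ) :=
  fun x => single s 1 + (opPerm hlb s)⁻¹ • x

noncomputable def affineRep (hRC : RCLaw op) : StructureMonoid op →* Function.End (S →₀ ℕ) :=
  lift (affineGen hlb) fun s t _ => by
    funext x
    change single s 1 + _ • (single (op s t) 1 + _ • x)
      = single t 1 + _ • (single (op t s) 1 + _ • x)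
    rw [smul_add, smul_add, comapSMul_single, comapSMul_single, opPerm_inv_smul_op,
      opPerm_inv_smul_op, smul_smul, smul_smul, ← mul_inv_rev, ← mul_inv_rev,
      opPerm_op_mul_opPerm hlb hRC, ← add_assoc, ← add_assoc, add_comm (single s 1)]

noncomputable def cocycle (hRC : RCLaw op) (m : StructureMonoid op) : S →₀ ℕ :=
  affineRep hlb hRC m • 0

variable {hlb} {hRC : RCLaw op}

@[simp]
theorem permRep_smGen (s : S) : permRep hlb hRC (smGen op s) = (opPerm hlb s)⁻¹ :=
  lift_smGen _ _ s

theorem affineRep_smGen_smul (s : S) (x : S →₀ ℕ) :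
    affineRep hlb hRC (smGen op s) • x = single s 1 + (opPerm hlb s)⁻¹ • x :=
  rfl

@[simp]
theorem cocycle_one : cocycle hlb hRC 1 = 0 := rfl

@[simp]
theorem cocycle_smGen (s : S) : cocycle hlb hRC (smGen op s) = single s 1 := by
  rw [cocycle, affineRep_smGen_smul, smul_zero, add_zero]

theorem affineRep_smul (m : StructureMonoid op) (x : S →₀ ℕ) :
    affineRep hlb hRC m • x = cocycle hlb hRC m + permRep hlb hRC m • x := by
  induction m using induction_on generalizing x with
  | one => simp
  | smGen_mul s m ih =>
    rw [cocycle, map_mul, mul_smul, mul_smul, ih, ih, affineRep_smGen_smul, affineRep_smGen_smul,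
      map_mul, permRep_smGen, mul_smul, smul_zero, add_zero, smul_add, add_assoc]

theorem cocycle_mul (m n : StructureMonoid op) :
    cocycle hlb hRC (m * n) = cocycle hlb hRC m + permRep hlb hRC m • cocycle hlb hRC n := by
  rw [cocycle, map_mul, mul_smul, affineRep_smul]
  rfl

theorem cocycle_smGen_mul (s : S) (m : StructureMonoid op) :
    cocycle hlb hRC (smGen op s * m) = single s 1 + (opPerm hlb s)⁻¹ • cocycle hlb hRC m := by
  rw [cocycle_mul, cocycle_smGen, permRep_smGen]

theorem cocycle_smGen_mul_apply_of_ne {s t : S} (h : t ≠ s) (m : StructureMonoid op) :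
    cocycle hlb hRC (smGen op s * m) t = cocycle hlb hRC m (op s t) := by
  rw [cocycle_smGen_mul, Finsupp.add_apply, single_eq_of_ne h, zero_add, comapSMul_apply, inv_inv]
  rfl

theorem smGen_dvd_iff (t : S) (m : StructureMonoid op) :
    smGen op t ∣ m ↔ cocycle hlb hRC m t ≠ 0 := by
  refine ⟨?_, fun h => ?_⟩
  · rintro ⟨m, rfl⟩
    simp [cocycle_smGen_mul]
  induction m using induction_on generalizing t with
  | one => simp at h
  | smGen_mul s m ih =>
    obtain rfl | hts := eq_or_ne t s
    · exact dvd_mul_right _ _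
    rw [cocycle_smGen_mul_apply_of_ne hts] at h
    calc smGen op t ∣ smGen op t * smGen op (op t s) := dvd_mul_right _ _
      _ = smGen op s * smGen op (op s t) := (smGen_mul_smGen_op hts.symm).symm
      _ ∣ smGen op s * m := mul_dvd_mul_left _ (ih _ h)

theorem cocycle_eq_zero_iff {m : StructureMonoid op} : cocycle hlb hRC m = 0 ↔ m = 1 := by
  refine ⟨fun h => ?_, fun h => h ▸ cocycle_one⟩
  induction m using induction_on with
  | one => rfl
  | smGen_mul s m _ =>
    rw [cocycle_smGen_mul] at h
    simpa using DFunLike.congr_fun h s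

theorem cocycle_injective : Function.Injective (cocycle hlb hRC) := by
  intro m m' h
  induction m using induction_on generalizing m' with
  | one => exact (cocycle_eq_zero_iff.1 (h.symm.trans cocycle_one)).symm
  | smGen_mul s m ih =>
    obtain ⟨u, rfl⟩ := (smGen_dvd_iff s m').2 (h ▸ (smGen_dvd_iff s _).1 (dvd_mul_right _ m))
    rw [cocycle_smGen_mul, cocycle_smGen_mul] at h
    rw [ih (MulAction.injective _ (add_left_cancel h))]

theorem exists_cocycle_mul_eq_add (k : StructureMonoid op) (d : S →₀ ℕ) :
    ∃ x, cocycle hlb hRC (k * x) = cocycle hlb hRC k + d := by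
  induction d using Finsupp.induction_linear generalizing k with
  | zero => exact ⟨1, by simp⟩
  | add f g hf hg =>
    obtain ⟨x, hx⟩ := hf k
    obtain ⟨y, hy⟩ := hg (k * x)
    exact ⟨x * y, by rw [← mul_assoc, hy, hx, add_assoc]⟩
  | single a b =>
    induction b generalizing k with
    | zero => exact ⟨1, by simp⟩
    | succ b ih =>
      obtain ⟨x, hx⟩ := ih k
      refine ⟨x * smGen op ((permRep hlb hRC (k * x))⁻¹ • a), ?_⟩
      rw [← mul_assoc, cocycle_mul, cocycle_smGen, comapSMul_single, smul_inv_smul, hx,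
        single_add, add_assoc]

theorem dvd_iff_cocycle_le (m m' : StructureMonoid op) :
    m ∣ m' ↔ cocycle hlb hRC m ≤ cocycle hlb hRC m' := by
  refine ⟨?_, fun h => ?_⟩
  · rintro ⟨k, rfl⟩
    rw [cocycle_mul]
    exact le_self_add
  obtain ⟨d, hd⟩ := exists_add_of_le h
  obtain ⟨x, hx⟩ := exists_cocycle_mul_eq_add m d
  exact ⟨x, cocycle_injective (hx.trans hd.symm).symm⟩

theorem cocycle_surjective : Function.Surjective (cocycle hlb hRC) := fun d => by
  simpa using exists_cocycle_mul_eq_add (hlb := hlb) (hRC := hRC) 1 d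

variable (hlb hRC) in
noncomputable def cocycleEquiv : StructureMonoid op ≃ (S →₀ ℕ) :=
  Equiv.ofBijective (cocycle hlb hRC) ⟨cocycle_injective, cocycle_surjective⟩

variable (hlb hRC) in
noncomputable def length (m : StructureMonoid op) : ℕ := degree (cocycle hlb hRC m)

theorem length_mul (m n : StructureMonoid op) :
    length hlb hRC (m * n) = length hlb hRC m + length hlb hRC n := by
  rw [length, cocycle_mul, map_add, comapSMul_def, degree_mapDomain, length, length]

theorem length_smGen (s : S) : length hlb hRC (smGen op s) = 1 := by
  rw [length, cocycle_smGen, degree_single]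

theorem length_eq_zero_iff {m : StructureMonoid op} : length hlb hRC m = 0 ↔ m = 1 := by
  rw [length, degree_eq_zero_iff, cocycle_eq_zero_iff]

theorem isLeftCancelMul (hlb : ∀ s : S, Function.Bijective (op s)) (hRC : RCLaw op) :
    IsLeftCancelMul (StructureMonoid op) where
  mul_left_cancel a b c h := by
    have h' := congrArg (cocycle hlb hRC) h
    rw [cocycle_mul, cocycle_mul] at h'
    exact cocycle_injective (MulAction.injective _ (add_left_cancel h'))

theorem smGen_mul_smGen_op_dvd (hlb : ∀ s : S, Function.Bijective (op s)) (hRC : RCLaw op)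
    {s t : S} (hst : s ≠ t) {k : StructureMonoid op} (hs : smGen op s ∣ k)
    (ht : smGen op t ∣ k) : smGen op s * smGen op (op s t) ∣ k := by
  obtain ⟨k, rfl⟩ := hs
  rw [smGen_dvd_iff (hlb := hlb) (hRC := hRC), cocycle_smGen_mul_apply_of_ne hst.symm,
    ← smGen_dvd_iff] at ht
  exact mul_dvd_mul_left _ ht

end RCQuasigroup

end StructureMonoid

/-- The structure monoid `M` of an RC-quasigroup admits a length function, is
left-cancellative, any two elements admit a unique right-lcm and a unique left-gcd for the
left-divisibility relation, and for `s ≠ t` the right-lcm of `s` and `t` is `s·(s∘t)`. -/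
theorem statement7 {S : Type*} (op : S → S → S)
    (hRC : RCLaw op) (hlb : ∀ s : S, Function.Bijective (op s)) :
    (∃ lam : StructureMonoid op → ℕ,
      (∀ a b : StructureMonoid op, lam (a * b) = lam a + lam b) ∧
      (∀ g : StructureMonoid op, g ≠ 1 → 1 ≤ lam g) ∧
      (∀ s : S, lam (smGen op s) = 1)) ∧
    (∀ a b c : StructureMonoid op, a * b = a * c → b = c) ∧
    (∀ f g : StructureMonoid op,
      ∃! h : StructureMonoid op, (f ∣ h ∧ g ∣ h) ∧ ∀ k, f ∣ k → g ∣ k → h ∣ k) ∧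
    (∀ f g : StructureMonoid op,
      ∃! e : StructureMonoid op, (e ∣ f ∧ e ∣ g) ∧ ∀ c, c ∣ f → c ∣ g → c ∣ e) ∧
    (∀ s t : S, s ≠ t →
      (smGen op s ∣ smGen op s * smGen op (op s t)) ∧
      (smGen op t ∣ smGen op s * smGen op (op s t)) ∧
      (∀ k, smGen op s ∣ k → smGen op t ∣ k → smGen op s * smGen op (op s t) ∣ k)) := by
  open StructureMonoid in
  have := isLeftCancelMul hlb hRC
  refine ⟨⟨length hlb hRC, length_mul, fun g hg => ?_, length_smGen⟩,
    fun a b c => mul_left_cancel, fun f g => ?_, fun f g => ?_, fun s t hst => ?_⟩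
  · exact Nat.one_le_iff_ne_zero.2 (length_eq_zero_iff.not.2 hg)
  · exact existsUnique_lub_of_iff_le _ (cocycleEquiv hlb hRC) (dvd_iff_cocycle_le (hRC := hRC)) f g
  · exact existsUnique_lub_of_iff_le (flip (· ∣ ·)) ((cocycleEquiv hlb hRC).trans OrderDual.toDual)
      (fun a b => (dvd_iff_cocycle_le (hRC := hRC) b a).trans OrderDual.toDual_le_toDual.symm) f g
  · exact ⟨dvd_mul_right _ _, smGen_mul_smGen_op hst ▸ dvd_mul_right _ _,
      fun k => smGen_mul_smGen_op_dvd hlb hRC hst⟩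
end

section
/- Let (S,∘) be a bijective RC-quasigroup, M its structure monoid and G its structure group. Then M is cancellative (left- and right-), any two elements of M admit a common right-multiple and a common left-multiple, the canonical homomorphism M → G is injective, every element of G can be written f⁻¹g and also g′f′⁻¹ with f,g,f′,g′ in the image of M, and the group G is torsion-free. -/
/-- The defining relators `s(s∘t)(t(t∘s))⁻¹`, `s ≠ t`, of the structure group, as a set of
elements of the free group over `S`. -/
def rcRelsG {S : Type*} (op : S → S → S) : Set (FreeGroup S) :=
  { r | ∃ s t : S, s ≠ t ∧
      r = FreeGroup.of s * FreeGroup.of (op s t) * (FreeGroup.of t * FreeGroup.of (op t s))⁻¹ }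

/-- The structure group of `(S,∘)`: the group presented by generators `S` and relations
`s(s∘t) = t(t∘s)` for `s ≠ t`. -/
abbrev StructureGroup {S : Type*} (op : S → S → S) := PresentedGroup (rcRelsG op)

/-!
The structure group maps to `ℤ^(S) ⋊ Sym(S)` by `s ↦ (eₛ, (s∘-)⁻¹)`: the right-cyclic law is
exactly what makes the relations `s(s∘t) = t(t∘s)` hold there. On the structure monoid `M`, the
`ℤ^(S)`-component `ν` of this map is a nonnegative weight with `ν(s·m)(x) = [x = s] + ν(m)(s∘x)`.
If `ν(m)(t) > 0`, the defining relations move a `t` to the front of `m`; hence `f ∣ h ↔ ν f ≤ ν h`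
and `ν` is injective, which makes `M → G` injective and `M` cancellative. Right multiplication
by a suitable generator adds any `eₓ` to `ν`, so `ν` hits every nonnegative weight, and
`ν f ⊔ ν g` is the weight of a least common right multiple. Bijectivity of
`(s, t) ↦ (s∘t, t∘s)` gives `x·s = y·t` for all `s, t`, hence common left multiples, and `G` is a
group of left and right fractions of `M`.

For torsion, order `G` by `a ≤ b ↔ a⁻¹b ∈ M`. This order is left-invariant, and lcms in `M` give
joins of any two elements. If `x^k = 1`, then `x` permutes `{1, x, …, x^(k-1)}` and so fixes its
join `c`; `x·c = c` forces `x = 1`.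
-/

open Finsupp

attribute [local instance] Finsupp.comapSMul Finsupp.comapMulAction Finsupp.comapDistribMulAction

theorem Finset.Nonempty.exists_isLUB {α : Type*} [PartialOrder α] {s : Finset α}
    (hs : s.Nonempty) (hlub : ∀ a b : α, ∃ c, IsLUB {a, b} c) : ∃ c, IsLUB (s : Set α) c := by
  induction hs using Finset.Nonempty.cons_induction with
  | singleton a => exact ⟨a, by simp⟩
  | cons a s _ _ ih =>
    obtain ⟨c, hc⟩ := ih
    obtain ⟨d, hd⟩ := hlub a c
    refine ⟨d, (isLUB_congr ?_).1 hd⟩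
    rw [Finset.coe_cons, upperBounds_insert, upperBounds_insert, upperBounds_singleton,
      hc.upperBounds_eq]

section LeftOrderedGroup

variable {G : Type*} [Group G] [PartialOrder G] [MulLeftMono G]

theorem eq_one_of_pow_eq_one_of_isLUB (hlub : ∀ a b : G, ∃ c, IsLUB {a, b} c) {x : G} {k : ℕ}
    (hk : k ≠ 0) (hx : x ^ k = 1) : x = 1 := by
  classical
  obtain ⟨k, rfl⟩ := Nat.exists_eq_succ_of_ne_zero hk
  obtain ⟨c, hc⟩ := (Finset.nonempty_range_add_one.image (x ^ ·)).exists_isLUB hlub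
  have pow_le (n : ℕ) : x ^ n ≤ c := by
    rw [pow_eq_pow_mod n hx]
    exact hc.1 (Finset.mem_image_of_mem _ (Finset.mem_range.2 (Nat.mod_lt _ k.succ_pos)))
  have le_pow_mul (n : ℕ) : c ≤ x ^ n * c := by
    refine hc.2 ?_
    simp only [Finset.coe_image, Finset.coe_range, mem_upperBounds, Set.mem_image]
    rintro _ ⟨i, -, rfl⟩
    calc x ^ i = x ^ n * x ^ (i + k * n) := by
          rw [← pow_add, show n + (i + k * n) = i + (k + 1) * n by ring, pow_add, pow_mul, hx,
            one_pow, mul_one]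
      _ ≤ x ^ n * c := mul_le_mul_right (pow_le _) _
  have hxc : x * c = c := by
    refine le_antisymm ?_ (by simpa using le_pow_mul 1)
    calc x * c ≤ x * (x ^ k * c) := mul_le_mul_right (le_pow_mul k) _
      _ = c := by rw [← mul_assoc, ← pow_succ', hx, one_mul]
  exact mul_eq_right.mp hxc

end LeftOrderedGroup

section GroupOfFractions

variable {M G : Type*} [Monoid M] [Group G]

abbrev MonoidHom.leftPartialOrder (φ : M →* G) (hφ : Function.Injective φ)
    (hunit : ∀ a b : M, a * b = 1 → a = 1) : PartialOrder G where
  le a b := ∃ m, b = a * φ m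
  le_refl a := ⟨1, by simp⟩
  le_trans := by
    rintro a _ _ ⟨m, rfl⟩ ⟨m', rfl⟩
    exact ⟨m * m', by rw [map_mul, mul_assoc]⟩
  le_antisymm := by
    rintro a _ ⟨m, rfl⟩ ⟨m', hm'⟩
    rw [mul_assoc, ← map_mul, left_eq_mul, ← φ.map_one] at hm'
    rw [hunit m m' (hφ hm'), map_one, mul_one]

theorem MonoidHom.exists_eq_inv_mul (φ : M →* G) (hφ : Subgroup.closure (Set.range φ) = ⊤)
    (hore : ∀ a b : M, ∃ c d, c * a = d * b) (x : G) : ∃ f g, x = (φ f)⁻¹ * φ g := by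
  have hx : x ∈ Subgroup.closure (Set.range φ) := hφ ▸ Subgroup.mem_top x
  induction hx using Subgroup.closure_induction with
  | mem _ h => obtain ⟨g, rfl⟩ := h; exact ⟨1, g, by simp⟩
  | one => exact ⟨1, 1, by simp⟩
  | mul _ _ _ _ ih₁ ih₂ =>
    obtain ⟨f, g, rfl⟩ := ih₁
    obtain ⟨f', g', rfl⟩ := ih₂
    obtain ⟨c, d, hcd⟩ := hore g f'
    have hswap : φ g * (φ f')⁻¹ = (φ c)⁻¹ * φ d := by
      rw [eq_inv_mul_iff_mul_eq, ← mul_assoc, ← map_mul, hcd, map_mul,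
        mul_inv_cancel_right]
    refine ⟨c * f, d * g', ?_⟩
    rw [map_mul, map_mul, mul_inv_rev, mul_assoc, ← mul_assoc (φ g), hswap]
    group
  | inv _ _ ih =>
    obtain ⟨f, g, rfl⟩ := ih
    exact ⟨g, f, by rw [mul_inv_rev, inv_inv]⟩

theorem MonoidHom.exists_eq_mul_inv (φ : M →* G) (hfrac : ∀ x, ∃ f g, x = (φ f)⁻¹ * φ g)
    (hore : ∀ a b : M, ∃ c d, a * c = b * d) (x : G) : ∃ f g, x = φ g * (φ f)⁻¹ := by
  obtain ⟨f, g, rfl⟩ := hfrac x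
  obtain ⟨u, v, huv⟩ := hore f g
  exact ⟨v, u, by rw [inv_mul_eq_iff_eq_mul, ← mul_assoc, ← map_mul, huv, map_mul,
    mul_inv_cancel_right]⟩

theorem MonoidHom.eq_one_of_pow_eq_one (φ : M →* G) (hφ : Function.Injective φ)
    (hunit : ∀ a b : M, a * b = 1 → a = 1) (hfrac : ∀ x, ∃ f g, x = (φ f)⁻¹ * φ g)
    (hlcm : ∀ f g : M, ∃ h, f ∣ h ∧ g ∣ h ∧ ∀ h', f ∣ h' → g ∣ h' → h ∣ h')
    {x : G} {k : ℕ} (hk : k ≠ 0) (hx : x ^ k = 1) : x = 1 := by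
  let _ := φ.leftPartialOrder hφ hunit
  have : MulLeftMono G := ⟨fun c a b ⟨m, h⟩ => ⟨m, by rw [h, mul_assoc]⟩⟩
  have le_iff (f g : M) : φ f ≤ φ g ↔ f ∣ g :=
    ⟨fun ⟨m, h⟩ => ⟨m, hφ (by rw [h, map_mul])⟩, fun ⟨m, h⟩ => ⟨m, by rw [h, map_mul]⟩⟩
  refine eq_one_of_pow_eq_one_of_isLUB (fun a b => ?_) hk hx
  obtain ⟨f, g, hfg⟩ := hfrac (a⁻¹ * b)
  obtain ⟨h, hfh, hgh, hleast⟩ := hlcm f g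
  have hlub : IsLUB {φ f, φ g} (φ h) := by
    refine ⟨?_, fun w hw => ?_⟩
    · rintro _ (rfl | rfl)
      exacts [(le_iff f h).2 hfh, (le_iff g h).2 hgh]
    · obtain ⟨m, rfl⟩ := hw (Set.mem_insert _ _)
      rw [← map_mul] at hw ⊢
      exact (le_iff _ _).2 (hleast _ (dvd_mul_right f m) ((le_iff _ _).1 (hw (by simp))))
  refine ⟨a * (φ f)⁻¹ * φ h, ?_⟩
  have := (OrderIso.mulLeft (a * (φ f)⁻¹)).isLUB_image'.2 hlub
  rwa [Set.image_pair, OrderIso.mulLeft_apply, OrderIso.mulLeft_apply, OrderIso.mulLeft_apply,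
    inv_mul_cancel_right, mul_assoc, ← hfg, mul_inv_cancel_left] at this

end GroupOfFractions

theorem StructureGroup.of_mul_of {S : Type*} {op : S → S → S} (s t : S) :
    (PresentedGroup.of s : StructureGroup op) * PresentedGroup.of (op s t)
      = PresentedGroup.of t * PresentedGroup.of (op t s) := by
  rcases eq_or_ne s t with rfl | hst
  · rfl
  · exact PresentedGroup.mk_eq_mk_of_mul_inv_mem ⟨s, t, hst, rfl⟩

namespace StructureMonoid

variable {S : Type*} {op : S → S → S}

theorem smGen_mul_smGen (s t : S) :
    smGen op s * smGen op (op s t) = smGen op t * smGen op (op t s) := by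
  rcases eq_or_ne s t with rfl | hst
  · rfl
  · exact PresentedMonoid.mk_eq_mk_of_rel ⟨s, t, hst, rfl, rfl⟩

theorem closure_range_smGen : Submonoid.closure (Set.range (smGen op)) = ⊤ :=
  PresentedMonoid.closure_range_of (rcRel op)

theorem induction_left {p : StructureMonoid op → Prop} (one : p 1)
    (gen_mul : ∀ s m, p m → p (smGen op s * m)) (m : StructureMonoid op) : p m := by
  have hm : m ∈ Submonoid.closure (Set.range (smGen op)) := by
    rw [closure_range_smGen]; trivial
  induction hm using Submonoid.closure_induction_left with
  | one => exact one
  | mul_left _ hs _ _ ih => obtain ⟨s, rfl⟩ := hs; exact gen_mul s _ ih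

theorem induction_right {p : StructureMonoid op → Prop} (one : p 1)
    (mul_gen : ∀ m s, p m → p (m * smGen op s)) (m : StructureMonoid op) : p m := by
  have hm : m ∈ Submonoid.closure (Set.range (smGen op)) := by
    rw [closure_range_smGen]; trivial
  induction hm using Submonoid.closure_induction_right with
  | one => exact one
  | mul_right _ _ _ hs ih => obtain ⟨s, rfl⟩ := hs; exact mul_gen _ s ih

variable (op) in
noncomputable def toGroup : StructureMonoid op →* StructureGroup op :=
  PresentedMonoid.lift PresentedGroup.of <| by
    rintro _ _ ⟨s, t, -, rfl, rfl⟩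
    simpa using StructureGroup.of_mul_of s t

@[simp] theorem toGroup_smGen (s : S) : toGroup op (smGen op s) = PresentedGroup.of s := rfl

theorem closure_range_toGroup : Subgroup.closure (Set.range (toGroup op)) = ⊤ :=
  eq_top_mono (Subgroup.closure_mono (Set.range_subset_iff.2 fun s => ⟨smGen op s, rfl⟩))
    (PresentedGroup.closure_range_of _)

section LeftMultiples

variable (hbij : Function.Bijective (fun p : S × S => (op p.1 p.2, op p.2 p.1)))
include hbij

theorem exists_smGen_mul_eq_smGen_mul (s t : S) :
    ∃ x y, smGen op x * smGen op s = smGen op y * smGen op t := by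
  obtain ⟨⟨x, y⟩, hxy⟩ := hbij.surjective (s, t)
  simp only [Prod.mk.injEq] at hxy
  exact ⟨x, y, by rw [← hxy.1, ← hxy.2, smGen_mul_smGen]⟩

theorem exists_mul_eq_mul_smGen (f : StructureMonoid op) (t : S) :
    ∃ u w, u * f = w * smGen op t := by
  induction f using induction_right generalizing t with
  | one => exact ⟨smGen op t, 1, by simp⟩
  | mul_gen f s ih =>
    obtain ⟨x, y, hxy⟩ := exists_smGen_mul_eq_smGen_mul hbij s t
    obtain ⟨u, w, huw⟩ := ih x
    exact ⟨u, w * smGen op y, by rw [← mul_assoc, huw, mul_assoc, hxy, mul_assoc]⟩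

theorem exists_mul_eq_mul (f g : StructureMonoid op) : ∃ u w, u * f = w * g := by
  induction g using induction_right generalizing f with
  | one => exact ⟨1, f, by simp⟩
  | mul_gen g t ih =>
    obtain ⟨u, w, huw⟩ := exists_mul_eq_mul_smGen hbij f t
    obtain ⟨p, q, hpq⟩ := ih w
    exact ⟨p * u, q, by rw [mul_assoc, huw, ← mul_assoc, hpq, mul_assoc]⟩

end LeftMultiples

end StructureMonoid

structure IsRCQuasigroup {S : Type*} (op : S → S → S) : Prop where
  rcLaw : RCLaw op
  bijective_left : ∀ s, Function.Bijective (op s)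

noncomputable def permRelabel (S : Type*) : Equiv.Perm S →* MulAut (Multiplicative (S →₀ ℤ)) :=
  (MulAutMultiplicative (G := S →₀ ℤ)).symm.toMonoidHom.comp (DistribMulAction.toAddAut _ _)

abbrev WeightGroup (S : Type*) := Multiplicative (S →₀ ℤ) ⋊[permRelabel S] Equiv.Perm S

@[simp] theorem permRelabel_apply {S : Type*} (σ : Equiv.Perm S) (v : S →₀ ℤ) :
    permRelabel S σ (Multiplicative.ofAdd v) = Multiplicative.ofAdd (σ • v) := rfl

namespace IsRCQuasigroup

open StructureMonoid

variable {S : Type*} {op : S → S → S} (hS : IsRCQuasigroup op)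

noncomputable def leftPerm (s : S) : Equiv.Perm S := Equiv.ofBijective (op s) (hS.bijective_left s)

@[simp] theorem leftPerm_apply (s t : S) : hS.leftPerm s t = op s t := rfl

noncomputable def weightGen (s : S) : WeightGroup S :=
  ⟨Multiplicative.ofAdd (single s 1), (hS.leftPerm s)⁻¹⟩

theorem weightGen_mul_weightGen (s t : S) :
    hS.weightGen s * hS.weightGen (op s t) = hS.weightGen t * hS.weightGen (op t s) := by
  have hinv (s t : S) : (hS.leftPerm s)⁻¹ (op s t) = t := (hS.leftPerm s).symm_apply_apply t
  ext1
  · simp only [weightGen, SemidirectProduct.mul_left, permRelabel_apply, comapSMul_single,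
      Equiv.Perm.smul_def, hinv, ← ofAdd_add, add_comm]
  · simp only [weightGen, SemidirectProduct.mul_right, ← mul_inv_rev]
    congr 1
    exact Equiv.ext (hS.rcLaw s t)

noncomputable def weightHom : StructureGroup op →* WeightGroup S :=
  PresentedGroup.toGroup (f := hS.weightGen) <| by
    rintro r ⟨s, t, -, rfl⟩
    simp [hS.weightGen_mul_weightGen s t]

noncomputable def weight (m : StructureMonoid op) : S →₀ ℤ :=
  Multiplicative.toAdd (hS.weightHom (toGroup op m)).left

noncomputable def perm (m : StructureMonoid op) : Equiv.Perm S :=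
  (hS.weightHom (toGroup op m)).right

theorem weight_mul (a b : StructureMonoid op) :
    hS.weight (a * b) = hS.weight a + hS.perm a • hS.weight b := by
  rw [weight, weight, weight, perm, map_mul, map_mul, SemidirectProduct.mul_left, toAdd_mul]
  rfl

@[simp] theorem weight_one : hS.weight 1 = 0 := by simp [weight]

@[simp] theorem weight_smGen (s : S) : hS.weight (smGen op s) = single s 1 := by
  simp [weight, weightHom, weightGen]

@[simp] theorem perm_smGen (s : S) : hS.perm (smGen op s) = (hS.leftPerm s)⁻¹ := by
  simp [perm, weightHom, weightGen]

theorem weight_smGen_mul_apply (s : S) (m : StructureMonoid op) (x : S) :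
    hS.weight (smGen op s * m) x = single s 1 x + hS.weight m (op s x) := by
  rw [weight_mul, weight_smGen, perm_smGen, Finsupp.add_apply, comapSMul_apply, inv_inv,
    Equiv.Perm.smul_def, leftPerm_apply]

theorem weight_mul_smGen (m : StructureMonoid op) (s : S) :
    hS.weight (m * smGen op s) = hS.weight m + single (hS.perm m s) 1 := by
  rw [weight_mul, weight_smGen, comapSMul_single, Equiv.Perm.smul_def]

theorem weight_nonneg (m : StructureMonoid op) : 0 ≤ hS.weight m := by
  induction m using induction_left with
  | one => rw [weight_one]
  | gen_mul s m ih =>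
    intro x
    rw [weight_smGen_mul_apply]
    exact add_nonneg (single_nonneg.2 zero_le_one x) (ih _)

theorem weight_smGen_mul_self_pos (s : S) (m : StructureMonoid op) :
    0 < hS.weight (smGen op s * m) s := by
  have : (0 : ℤ) ≤ hS.weight m (op s s) := hS.weight_nonneg m _
  rw [weight_smGen_mul_apply, single_eq_same]
  omega

theorem eq_one_of_weight_eq_zero {m : StructureMonoid op} (h : hS.weight m = 0) : m = 1 := by
  induction m using induction_left with
  | one => rfl
  | gen_mul s m _ => simpa [h] using hS.weight_smGen_mul_self_pos s m

theorem exists_eq_smGen_mul_of_weight_pos {m : StructureMonoid op} {t : S}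
    (h : 0 < hS.weight m t) : ∃ m', m = smGen op t * m' := by
  induction m using induction_left generalizing t with
  | one => simp at h
  | gen_mul s m ih =>
    rcases eq_or_ne s t with rfl | hst
    · exact ⟨m, rfl⟩
    · rw [weight_smGen_mul_apply, single_eq_of_ne' hst, zero_add] at h
      obtain ⟨m', rfl⟩ := ih h
      exact ⟨smGen op (op t s) * m', by rw [← mul_assoc, smGen_mul_smGen, mul_assoc]⟩

theorem weight_le_of_dvd {f h : StructureMonoid op} (hfh : f ∣ h) : hS.weight f ≤ hS.weight h := by
  obtain ⟨c, rfl⟩ := hfh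
  rw [weight_mul]
  refine le_add_of_nonneg_right fun x => ?_
  rw [comapSMul_apply]
  exact hS.weight_nonneg c _

theorem dvd_of_weight_le {f h : StructureMonoid op} (hle : hS.weight f ≤ hS.weight h) : f ∣ h := by
  induction f using induction_left generalizing h with
  | one => exact one_dvd h
  | gen_mul s f ih =>
    obtain ⟨h, rfl⟩ := hS.exists_eq_smGen_mul_of_weight_pos
      ((hS.weight_smGen_mul_self_pos s f).trans_le (hle s))
    refine mul_dvd_mul_left _ (ih fun x => ?_)
    obtain ⟨y, rfl⟩ := (hS.bijective_left s).surjective x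
    simpa only [weight_smGen_mul_apply, add_le_add_iff_left] using hle y

theorem dvd_iff_weight_le {f h : StructureMonoid op} : f ∣ h ↔ hS.weight f ≤ hS.weight h :=
  ⟨hS.weight_le_of_dvd, hS.dvd_of_weight_le⟩

theorem weight_injective : Function.Injective hS.weight := by
  intro f h hfh
  obtain ⟨c, rfl⟩ := hS.dvd_of_weight_le hfh.le
  rw [weight_mul, left_eq_add, smul_eq_zero_iff_eq] at hfh
  rw [hS.eq_one_of_weight_eq_zero hfh, mul_one]

theorem exists_weight_eq_add_single (m : StructureMonoid op) (x : S) (k : ℕ) :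
    ∃ m', hS.weight m' = hS.weight m + single x (k : ℤ) := by
  induction k with
  | zero => exact ⟨m, by simp⟩
  | succ k ih =>
    obtain ⟨m', hm'⟩ := ih
    refine ⟨m' * smGen op ((hS.perm m').symm x), ?_⟩
    rw [weight_mul_smGen, hm', Equiv.apply_symm_apply, add_assoc, ← single_add, Nat.cast_succ]

theorem exists_weight_eq (a : S →₀ ℤ) (ha : 0 ≤ a) : ∃ m, hS.weight m = a := by
  induction a using Finsupp.induction with
  | zero => exact ⟨1, hS.weight_one⟩
  | single_add x b f hx hb ih =>
    have hfx : f x = 0 := notMem_support_iff.mp hx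
    have hb0 : 0 ≤ b := by simpa [hfx] using ha x
    obtain ⟨m, hm⟩ := ih fun y => by
      rcases eq_or_ne x y with rfl | hxy
      · exact hfx.symm.le
      · simpa [single_eq_of_ne' hxy] using ha y
    lift b to ℕ using hb0
    obtain ⟨m', hm'⟩ := hS.exists_weight_eq_add_single m x b
    exact ⟨m', by rw [hm', hm, add_comm]⟩

theorem exists_lcm (hS : IsRCQuasigroup op) (f g : StructureMonoid op) :
    ∃ h, f ∣ h ∧ g ∣ h ∧ ∀ h', f ∣ h' → g ∣ h' → h ∣ h' := by
  obtain ⟨h, hh⟩ :=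
    hS.exists_weight_eq (hS.weight f ⊔ hS.weight g) (le_sup_of_le_left (hS.weight_nonneg f))
  refine ⟨h, ?_⟩
  simp only [hS.dvd_iff_weight_le, hh]
  exact ⟨le_sup_left, le_sup_right, fun _ => sup_le⟩

theorem eq_one_of_mul_eq_one (hS : IsRCQuasigroup op) {a b : StructureMonoid op} (h : a * b = 1) :
    a = 1 := by
  refine hS.eq_one_of_weight_eq_zero (le_antisymm ?_ (hS.weight_nonneg a))
  calc hS.weight a ≤ hS.weight (a * b) := hS.weight_le_of_dvd (dvd_mul_right a b)
    _ = 0 := by rw [h, weight_one]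

theorem toGroup_injective (hS : IsRCQuasigroup op) : Function.Injective (toGroup op) :=
  fun _ _ h => hS.weight_injective (by simp only [weight, h])

end IsRCQuasigroup

/-- For a bijective RC-quasigroup `(S,∘)` with structure monoid `M` and
structure group `G`: `M` is left- and right-cancellative, any two elements of `M` admit a
common right-multiple and a common left-multiple, the canonical homomorphism `M → G` is
injective, every element of `G` is a left fraction and a right fraction of elements of the
image of `M`, and `G` is torsion-free. -/
theorem statement8 {S : Type*} (op : S → S → S)
    (hRC : RCLaw op) (hlb : ∀ s : S, Function.Bijective (op s))
    (hbij : Function.Bijective (fun p : S × S => (op p.1 p.2, op p.2 p.1))) :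
    (∀ a b c : StructureMonoid op, a * b = a * c → b = c) ∧
    (∀ a b c : StructureMonoid op, b * a = c * a → b = c) ∧
    (∀ f g : StructureMonoid op, ∃ h, f ∣ h ∧ g ∣ h) ∧
    (∀ f g : StructureMonoid op, ∃ h f' g', h = f' * f ∧ h = g' * g) ∧
    (∃ φ : StructureMonoid op →* StructureGroup op,
      (∀ s : S, φ (smGen op s) = PresentedGroup.of s) ∧
      Function.Injective φ ∧
      (∀ x : StructureGroup op, ∃ f g : StructureMonoid op, x = (φ f)⁻¹ * φ g) ∧
      (∀ x : StructureGroup op, ∃ f g : StructureMonoid op, x = φ g * (φ f)⁻¹)) ∧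
    (∀ x : StructureGroup op, ∀ k : ℕ, k ≠ 0 → x ^ k = 1 → x = 1) := by
  have hS : IsRCQuasigroup op := ⟨hRC, hlb⟩
  set φ := StructureMonoid.toGroup op
  have hφ : Function.Injective φ := hS.toGroup_injective
  have hleftOre := StructureMonoid.exists_mul_eq_mul hbij
  have hrightOre (f g : StructureMonoid op) : ∃ u v, f * u = g * v := by
    obtain ⟨h, ⟨u, rfl⟩, ⟨v, hv⟩, -⟩ := hS.exists_lcm f g
    exact ⟨u, v, hv⟩
  have hfrac := φ.exists_eq_inv_mul StructureMonoid.closure_range_toGroup hleftOre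
  refine ⟨fun a b c h => hφ (mul_left_cancel (a := φ a) ?_),
    fun a b c h => hφ (mul_right_cancel (b := φ a) ?_), fun f g => ?_, fun f g => ?_,
    ⟨φ, fun _ => rfl, hφ, hfrac, φ.exists_eq_mul_inv hfrac hrightOre⟩,
    fun x k hk hx => φ.eq_one_of_pow_eq_one hφ (fun _ _ => hS.eq_one_of_mul_eq_one) hfrac
      hS.exists_lcm hk hx⟩
  · rw [← map_mul, ← map_mul, h]
  · rw [← map_mul, ← map_mul, h]
  · obtain ⟨h, hf, hg, -⟩ := hS.exists_lcm f g
    exact ⟨h, hf, hg⟩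
  · obtain ⟨u, w, h⟩ := hleftOre f g
    exact ⟨u * f, u, w, rfl, h⟩
end

section
/- Let (S,∘) be an RC-quasigroup and M its structure monoid. Elements s₁,…,sₙ of S are pairwise distinct if and only if Πₙ(s₁,…,sₙ) is the right-lcm of s₁,…,sₙ in M. In this case, if moreover (S,∘) is bijective, then Πₙ(s₁,…,sₙ) is also the left-lcm (least common left-multiple, i.e., least upper bound for right-divisibility) of the elements s̃₁,…,s̃ₙ defined by s̃ᵢ = Ωₙ(s₁,…,ŝᵢ,…,sₙ,sᵢ). -/
namespace RCQuasigroup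

open List

section Reversing

variable {S : Type*} [DecidableEq S] (θ : S → S → S)

/-- `revLetter θ s v = (s\v, v\s)`: reversing `s⁻¹v` into `(s\v)(v\s)⁻¹` with the complements
`s\t = θ s t`, `s\s = ε`; the right edge `v\s` has at most one letter. -/
def revLetter : S → List S → List S × Option S
  | s, [] => ([], some s)
  | s, t :: v =>
    if s = t then (v, none)
    else (θ s t :: (revLetter (θ t s) v).1, (revLetter (θ t s) v).2)

def revOption : Option S → List S → List S × Option S
  | none, v => (v, none)
  | some s, v => revLetter θ s v

/-- Word reversing: `rev θ u v = (u\v, v\u)`. -/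
def rev : List S → List S → List S × List S
  | [], v => (v, [])
  | s :: u, v =>
    ((rev u (revLetter θ s v).1).1, (revLetter θ s v).2.toList ++ (rev u (revLetter θ s v).1).2)

def resid (u v : List S) : List S := (rev θ u v).1

variable {θ}

@[simp] lemma rev_nil_left (v : List S) : rev θ [] v = (v, []) := rfl

@[simp] lemma rev_nil_right (u : List S) : rev θ u [] = ([], u) := by
  induction u with
  | nil => rfl
  | cons s u ih => simp [rev, revLetter, ih]

@[simp] lemma resid_nil_left (v : List S) : resid θ [] v = v := rfl

@[simp] lemma resid_nil_right (u : List S) : resid θ u [] = [] := by simp [resid]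

lemma rev_cons (s : S) (u v : List S) :
    rev θ (s :: u) v =
      ((rev θ u (revLetter θ s v).1).1,
        (revLetter θ s v).2.toList ++ (rev θ u (revLetter θ s v).1).2) := rfl

lemma revLetter_singleton (s t : S) :
    revLetter θ s [t] = if s = t then ([], none) else ([θ s t], some (θ t s)) := by
  split_ifs with h <;> simp [revLetter, h]

lemma resid_singleton (s t : S) : resid θ [s] [t] = if s = t then [] else [θ s t] := by
  split_ifs with h <;> simp [resid, rev, revLetter_singleton, h]

lemma resid_singleton_of_ne {s t : S} (h : s ≠ t) : resid θ [s] [t] = [θ s t] := by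
  simp [resid_singleton, h]

lemma revLetter_append (s : S) (v₁ v₂ : List S) :
    revLetter θ s (v₁ ++ v₂) =
      ((revLetter θ s v₁).1 ++ (revOption θ (revLetter θ s v₁).2 v₂).1,
        (revOption θ (revLetter θ s v₁).2 v₂).2) := by
  induction v₁ generalizing s with
  | nil => simp [revLetter, revOption]
  | cons t v₁ ih =>
    by_cases h : s = t
    · simp [revLetter, h, revOption]
    · simp [revLetter, h, ih (θ t s)]

lemma resid_append_left (u₁ u₂ v : List S) :
    resid θ (u₁ ++ u₂) v = resid θ u₂ (resid θ u₁ v) := by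
  induction u₁ generalizing v with
  | nil => rfl
  | cons s u₁ ih => exact ih _

lemma rev_append_right (u v₁ v₂ : List S) :
    rev θ u (v₁ ++ v₂) =
      ((rev θ u v₁).1 ++ (rev θ (rev θ u v₁).2 v₂).1, (rev θ (rev θ u v₁).2 v₂).2) := by
  induction u generalizing v₁ v₂ with
  | nil => simp
  | cons s u ih =>
    rw [rev_cons, revLetter_append, rev_cons]
    rcases revLetter θ s v₁ with ⟨b, _ | x⟩
    · simp only [revOption, Option.toList_none, nil_append, ih]
    · simp only [revOption, Option.toList_some, singleton_append, ih, rev_cons]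

lemma rev_singleton_right (s : S) (v : List S) :
    rev θ v [s] = ((revLetter θ s v).2.toList, (revLetter θ s v).1) := by
  induction v generalizing s with
  | nil => simp [revLetter]
  | cons t v ih =>
    rw [rev_cons, revLetter_singleton]
    by_cases h : t = s
    · subst h; simp [revLetter]
    · simp [h, ih, revLetter, Ne.symm h]

lemma rev_snd (u v : List S) : (rev θ u v).2 = resid θ v u := by
  induction u generalizing v with
  | nil => simp
  | cons s u ih =>
    rw [rev_cons, ih, resid, resid, ← singleton_append, rev_append_right, rev_singleton_right]

lemma resid_append_right (u v₁ v₂ : List S) :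
    resid θ u (v₁ ++ v₂) = resid θ u v₁ ++ resid θ (resid θ v₁ u) v₂ := by
  simp only [resid, rev_append_right, rev_snd]

@[simp] lemma resid_self (u : List S) : resid θ u u = [] := by
  induction u with
  | nil => rfl
  | cons s u ih => simpa [resid, rev_cons, revLetter] using ih

end Reversing

section Cube

variable {S : Type*} [DecidableEq S] {θ : S → S → S}

variable (θ) in
def Cube (u v w : List S) : Prop :=
  resid θ (resid θ u v) (resid θ u w) = resid θ (resid θ v u) (resid θ v w)

lemma Cube.append_left {u₁ u₂ v w : List S} (h₁ : Cube θ u₁ v w)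
    (h₂ : Cube θ u₂ (resid θ u₁ v) (resid θ u₁ w)) : Cube θ (u₁ ++ u₂) v w := by
  unfold Cube at *
  rw [resid_append_left, resid_append_left, resid_append_right v u₁ u₂, resid_append_left, h₂, h₁]

lemma Cube.append_middle {u v₁ v₂ w : List S} (h₁ : Cube θ u v₁ w)
    (h₂ : Cube θ (resid θ v₁ u) v₂ (resid θ v₁ w)) : Cube θ u (v₁ ++ v₂) w := by
  unfold Cube at *
  rw [resid_append_right u v₁ v₂, resid_append_left, resid_append_left v₁ v₂ u,
    resid_append_left v₁ v₂ w, h₁, h₂]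

lemma Cube.append_right {u v w₁ w₂ : List S} (h₁ : Cube θ u v w₁) (h₂ : Cube θ u w₁ v)
    (h₃ : Cube θ v w₁ u) (h₄ : Cube θ (resid θ w₁ u) (resid θ w₁ v) w₂) :
    Cube θ u v (w₁ ++ w₂) := by
  unfold Cube at *
  rw [resid_append_right u w₁ w₂, resid_append_right (resid θ u v),
    resid_append_right v w₁ w₂, resid_append_right (resid θ v u), h₁, h₂, h₄, ← h₃]

lemma length_resid_le_one {u v : List S} (hu : u.length ≤ 1) (hv : v.length ≤ 1) :
    (resid θ u v).length ≤ 1 := by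
  match u, hu, v, hv with
  | [], _, _, hv => exact hv
  | [_], _, [], _ => simp
  | [a], _, [b], _ => rw [resid_singleton]; split_ifs <;> simp

variable (hinj : ∀ s, Function.Injective (θ s)) (hRC : RCLaw θ)
include hinj hRC

/-- On letters, the cube condition is the right-cyclic law. -/
lemma cube_of_length_le_one {u v w : List S} (hu : u.length ≤ 1) (hv : v.length ≤ 1)
    (hw : w.length ≤ 1) : Cube θ u v w := by
  match u, hu, v, hv, w, hw with
  | [], _, _, _, _, _ | [_], _, [], _, _, _ | [_], _, [_], _, [], _ => simp [Cube]
  | [s], _, [t], _, [r], _ =>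
    unfold Cube
    by_cases hst : s = t
    · subst hst; simp
    by_cases hrs : r = s
    · subst hrs; simp [resid_singleton, hst, Ne.symm hst]
    by_cases hrt : r = t
    · subst hrt; simp [resid_singleton, hst, Ne.symm hst]
    rw [resid_singleton_of_ne hst, resid_singleton_of_ne (Ne.symm hst),
      resid_singleton_of_ne (Ne.symm hrs), resid_singleton_of_ne (Ne.symm hrt),
      resid_singleton_of_ne fun h => hrt (hinj s h).symm,
      resid_singleton_of_ne fun h => hrs (hinj t h).symm, hRC]

lemma cube_of_length_le_one_left_middle (w : List S) {u v : List S} (hu : u.length ≤ 1)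
    (hv : v.length ≤ 1) : Cube θ u v w := by
  induction w generalizing u v with
  | nil => simp [Cube]
  | cons c w ih =>
    have hc : [c].length ≤ 1 := le_refl _
    exact Cube.append_right (w₁ := [c]) (cube_of_length_le_one hinj hRC hu hv hc)
      (cube_of_length_le_one hinj hRC hu hc hv) (cube_of_length_le_one hinj hRC hv hc hu)
      (ih (length_resid_le_one hc hu) (length_resid_le_one hc hv))

lemma cube_of_length_le_one_left (v w : List S) {u : List S} (hu : u.length ≤ 1) :
    Cube θ u v w := by
  induction v generalizing u w with
  | nil => simp [Cube]
  | cons c v ih =>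
    have hc : [c].length ≤ 1 := le_refl _
    exact Cube.append_middle (v₁ := [c])
      (cube_of_length_le_one_left_middle hinj hRC w hu hc)
      (ih _ (length_resid_le_one hc hu))

theorem cube (u v w : List S) : Cube θ u v w := by
  induction u generalizing v w with
  | nil => simp [Cube]
  | cons c u ih =>
    exact Cube.append_left (u₁ := [c]) (cube_of_length_le_one_left hinj hRC v w (le_refl _))
      (ih _ _)

end Cube

section Monoid

variable {S : Type*} {θ : S → S → S}

variable (θ) in
def mk (u : List S) : StructureMonoid θ := (conGen (rcRel θ)).mk' (FreeMonoid.ofList u)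

lemma mk_append (u v : List S) : mk θ (u ++ v) = mk θ u * mk θ v := by
  simp [mk, FreeMonoid.ofList_append]

@[simp] lemma mk_nil : mk θ ([] : List S) = 1 := map_one _

lemma mk_surjective : Function.Surjective (mk θ) := fun m => by
  obtain ⟨w, rfl⟩ := Con.mk'_surjective m
  exact ⟨FreeMonoid.toList w, rfl⟩

lemma mk_pair {s t : S} (h : s ≠ t) : mk θ [s, θ s t] = mk θ [t, θ t s] :=
  (Con.eq _).2 <| ConGen.Rel.of _ _ ⟨s, t, h, rfl, rfl⟩

lemma mk_eq_mk_induction (P : List S → List S → Prop) (refl : ∀ u, P u u)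
    (symm : ∀ {u v}, P u v → P v u) (trans : ∀ {u v w}, P u v → P v w → P u w)
    (append : ∀ {u v u' v'}, P u v → P u' v' → P (u ++ u') (v ++ v'))
    (pair : ∀ s t, s ≠ t → P [s, θ s t] [t, θ t s]) {u v : List S} (h : mk θ u = mk θ v) :
    P u v := by
  let c : Con (FreeMonoid S) :=
    { r := fun a b => P a.toList b.toList
      iseqv := ⟨fun _ => refl _, symm, trans⟩
      mul' := append }
  have hle : conGen (rcRel θ) ≤ c :=
    Con.conGen_le.2 fun _ _ ⟨s, t, hst, ha, hb⟩ => by subst ha hb; exact pair s t hst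
  exact hle ((Con.eq _).1 h)

lemma length_eq_of_mk_eq {u v : List S} (h : mk θ u = mk θ v) : u.length = v.length :=
  mk_eq_mk_induction (fun u v => u.length = v.length) (fun _ => rfl) Eq.symm Eq.trans
    (fun h h' => by simp [h, h']) (fun _ _ _ => rfl) h

lemma length_le_of_mk_dvd {u v : List S} (h : mk θ u ∣ mk θ v) : u.length ≤ v.length := by
  obtain ⟨c, hc⟩ := h
  obtain ⟨w, rfl⟩ := mk_surjective c
  rw [← mk_append] at hc
  have := length_eq_of_mk_eq hc
  rw [length_append] at this
  omega

lemma mk_eq_of_mk_dvd_of_length_eq {u v : List S} (h : mk θ u ∣ mk θ v)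
    (hlen : u.length = v.length) : mk θ u = mk θ v := by
  obtain ⟨c, hc⟩ := h
  obtain ⟨w, rfl⟩ := mk_surjective c
  rw [← mk_append] at hc
  have hw : w = [] := by simpa [hlen] using (length_eq_of_mk_eq hc).symm
  rw [hc, hw, append_nil]

variable [DecidableEq S]

lemma mk_cons_revLetter (s : S) (v : List S) :
    mk θ (s :: (revLetter θ s v).1) = mk θ (v ++ (revLetter θ s v).2.toList) := by
  induction v generalizing s with
  | nil => rfl
  | cons t v ih =>
    by_cases h : s = t
    · subst h; simp [revLetter]
    · simp only [revLetter, if_neg h, cons_append]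
      set R := revLetter θ (θ t s) v
      calc mk θ (s :: θ s t :: R.1)
          = mk θ [s, θ s t] * mk θ R.1 := by rw [← mk_append]; rfl
        _ = mk θ [t] * mk θ (θ t s :: R.1) := by rw [mk_pair h, ← mk_append, ← mk_append]; rfl
        _ = mk θ (t :: (v ++ R.2.toList)) := by rw [ih, ← mk_append]; rfl

lemma mk_append_resid (u v : List S) :
    mk θ (u ++ resid θ u v) = mk θ (v ++ resid θ v u) := by
  induction u generalizing v with
  | nil => simp
  | cons s u ih =>
    set b := (revLetter θ s v).1
    have hsnd : resid θ v (s :: u) = (revLetter θ s v).2.toList ++ resid θ b u := by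
      rw [← rev_snd, rev_cons, rev_snd]
    calc mk θ (s :: u ++ resid θ (s :: u) v)
        = mk θ [s] * mk θ (u ++ resid θ u b) := by rw [← mk_append]; rfl
      _ = mk θ (s :: b) * mk θ (resid θ b u) := by rw [ih, ← mk_append, ← mk_append]; rfl
      _ = mk θ (v ++ resid θ v (s :: u)) := by
        rw [mk_cons_revLetter, ← mk_append, hsnd, append_assoc]

lemma resid_append_eq_nil {u v u' v' : List S} (h₁ : resid θ u v = []) (h₂ : resid θ v u = [])
    (h' : resid θ u' v' = []) : resid θ (u ++ u') (v ++ v') = [] := by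
  rw [resid_append_left, resid_append_right, h₁, h₂]
  simpa using h'

lemma resid_pair_eq_nil {s t : S} (h : s ≠ t) : resid θ [s, θ s t] [t, θ t s] = [] := by
  show resid θ ([s] ++ [θ s t]) ([t] ++ [θ t s]) = []
  rw [resid_append_left, resid_append_right, resid_singleton_of_ne h,
    resid_singleton_of_ne (Ne.symm h)]
  simp

section Complete

variable (hinj : ∀ s, Function.Injective (θ s)) (hRC : RCLaw θ)
include hinj hRC

lemma resid_eq_nil_trans {u v w : List S} (h₁ : resid θ u v = []) (h₂ : resid θ v w = [])
    (h₃ : resid θ v u = []) : resid θ u w = [] := by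
  have h := cube hinj hRC v u w
  unfold Cube at h
  rw [h₃, h₂, resid_nil_left, h₁] at h
  simpa using h.symm

lemma resid_eq_nil_of_mk_eq {u v : List S} (h : mk θ u = mk θ v) :
    resid θ u v = [] ∧ resid θ v u = [] :=
  mk_eq_mk_induction (fun u v => resid θ u v = [] ∧ resid θ v u = [])
    (fun u => ⟨resid_self u, resid_self u⟩) And.symm
    (fun h₁ h₂ => ⟨resid_eq_nil_trans hinj hRC h₁.1 h₂.1 h₁.2,
      resid_eq_nil_trans hinj hRC h₂.2 h₁.2 h₂.1⟩)
    (fun h h' => ⟨resid_append_eq_nil h.1 h.2 h'.1, resid_append_eq_nil h.2 h.1 h'.2⟩)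
    (fun _ _ hst => ⟨resid_pair_eq_nil hst, resid_pair_eq_nil (Ne.symm hst)⟩) h

lemma mk_dvd_mk_iff (u v : List S) : mk θ u ∣ mk θ v ↔ resid θ v u = [] := by
  constructor
  · rintro ⟨c, hc⟩
    obtain ⟨w, rfl⟩ := mk_surjective c
    rw [← mk_append] at hc
    have h := (resid_eq_nil_of_mk_eq hinj hRC hc).1
    rw [resid_append_right] at h
    exact (append_eq_nil_iff.1 h).1
  · intro h
    refine ⟨mk θ (resid θ u v), ?_⟩
    rw [← mk_append, mk_append_resid, h, append_nil]

/-- `u (u\v)` is a right-lcm of `u` and `v`. -/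
lemma resid_append_resid_eq_nil {k u v : List S} (hu : resid θ k u = [])
    (hv : resid θ k v = []) : resid θ k (u ++ resid θ u v) = [] := by
  have h := cube hinj hRC u k v
  unfold Cube at h
  rw [hu, hv, resid_nil_left] at h
  rw [resid_append_right, hu, h]
  simp

end Complete

end Monoid

section Omega

variable {S : Type*} {op : S → S → S}

variable (op) in
/-- `omegaL op [xₙ₋₁, …, x₁] t = Ωₙ(x₁, …, xₙ₋₁, t)`: the arguments are listed in reverse. -/
def omegaL : List S → S → S
  | [], t => t
  | a :: r, t => op (omegaL r a) (omegaL r t)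

variable (op) in
/-- `piWord op [xₙ, …, x₁]` is the word `Ω₁(x₁) Ω₂(x₁,x₂) ⋯ Ωₙ(x₁,…,xₙ)` of `Πₙ(x₁,…,xₙ)`. -/
def piWord : List S → List S
  | [] => []
  | a :: r => piWord r ++ [omegaL op r a]

@[simp] lemma length_piWord (r : List S) : (piWord op r).length = r.length := by
  induction r with
  | nil => rfl
  | cons a r ih => simp [piWord, ih]

lemma omegaL_injective (hinj : ∀ s, Function.Injective (op s)) (r : List S) :
    Function.Injective (omegaL op r) := by
  induction r with
  | nil => exact fun _ _ h => h
  | cons a r ih => exact fun _ _ h => ih (hinj _ h)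

lemma omegaL_perm (hRC : RCLaw op) {r r' : List S} (h : r.Perm r') (t : S) :
    omegaL op r t = omegaL op r' t := by
  induction h generalizing t with
  | nil => rfl
  | cons a _ ih => simp only [omegaL, ih]
  | swap a b l => exact hRC _ _ _
  | trans _ _ ih₁ ih₂ => exact (ih₁ t).trans (ih₂ t)

lemma exists_omegaL_erase_eq (hinj : ∀ s, Function.Injective (op s)) (hRC : RCLaw op)
    [DecidableEq S] {r : List S} {a b : S} (ha : a ∈ r) (hb : b ∈ r) (hab : a ≠ b) :
    ∃ x y, x ≠ y ∧ omegaL op (r.erase a) a = op x y ∧ omegaL op (r.erase b) b = op y x := by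
  set T := (r.erase a).erase b
  have hTa : (r.erase a).Perm (b :: T) := perm_cons_erase ((mem_erase_of_ne hab.symm).2 hb)
  have hTb : (r.erase b).Perm (a :: T) := by
    rw [show T = (r.erase b).erase a from erase_comm a b]
    exact perm_cons_erase ((mem_erase_of_ne hab).2 ha)
  refine ⟨omegaL op T b, omegaL op T a, fun h => hab (omegaL_injective hinj T h).symm, ?_, ?_⟩
  · rw [omegaL_perm hRC hTa]; rfl
  · rw [omegaL_perm hRC hTb]; rfl

variable [DecidableEq S] (hinj : ∀ s, Function.Injective (op s))
include hinj

lemma resid_piWord_singleton {r : List S} {t : S} (ht : t ∉ r) :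
    resid op (piWord op r) [t] = [omegaL op r t] := by
  induction r with
  | nil => rfl
  | cons a r ih =>
    rw [mem_cons, not_or] at ht
    rw [piWord, resid_append_left, ih ht.2, resid_singleton_of_ne]
    · rfl
    · exact fun h => ht.1 (omegaL_injective hinj r h).symm

variable (hRC : RCLaw op)
include hRC

lemma mk_dvd_mk_piWord {r : List S} (hr : r.Nodup) {x : S} (hx : x ∈ r) :
    mk op [x] ∣ mk op (piWord op r) := by
  induction r with
  | nil => cases hx
  | cons a r ih =>
    rw [nodup_cons] at hr
    rcases mem_cons.1 hx with rfl | hx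
    · rw [mk_dvd_mk_iff hinj hRC, piWord, resid_append_left, resid_piWord_singleton hinj hr.1]
      simp
    · rw [piWord, mk_append]
      exact (ih hr.2 hx).mul_right _

lemma resid_piWord_eq_nil {r : List S} (hr : r.Nodup) {k : List S}
    (hk : ∀ x ∈ r, resid op k [x] = []) : resid op k (piWord op r) = [] := by
  induction r with
  | nil => simp [piWord]
  | cons a r ih =>
    rw [nodup_cons] at hr
    rw [piWord, ← resid_piWord_singleton hinj hr.1]
    exact resid_append_resid_eq_nil hinj hRC (ih hr.2 fun x hx => hk x (mem_cons_of_mem a hx))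
      (hk a mem_cons_self)

theorem mk_piWord_dvd {r : List S} (hr : r.Nodup) {m : StructureMonoid op}
    (hm : ∀ x ∈ r, mk op [x] ∣ m) : mk op (piWord op r) ∣ m := by
  obtain ⟨k, rfl⟩ := mk_surjective m
  rw [mk_dvd_mk_iff hinj hRC]
  exact resid_piWord_eq_nil hinj hRC hr fun x hx => (mk_dvd_mk_iff hinj hRC _ _).1 (hm x hx)

lemma mk_piWord_perm {r r' : List S} (h : r.Perm r') (hr : r.Nodup) :
    mk op (piWord op r) = mk op (piWord op r') :=
  mk_eq_of_mk_dvd_of_length_eq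
    (mk_piWord_dvd hinj hRC hr fun _ hx =>
      mk_dvd_mk_piWord hinj hRC (h.nodup_iff.1 hr) (h.mem_iff.1 hx))
    (by simp [h.length_eq])

lemma mk_piWord_eq_mul {r : List S} (hr : r.Nodup) {a : S} (ha : a ∈ r) :
    mk op (piWord op r) = mk op (piWord op (r.erase a)) * mk op [omegaL op (r.erase a) a] := by
  rw [mk_piWord_perm hinj hRC (perm_cons_erase ha) hr, piWord, mk_append]

lemma nodup_of_mk_piWord_dvd {r : List S}
    (h : ∀ m, (∀ x ∈ r, mk op [x] ∣ m) → mk op (piWord op r) ∣ m) : r.Nodup := by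
  have hdvd := h _ fun x hx => mk_dvd_mk_piWord hinj hRC (nodup_dedup r) (mem_dedup.2 hx)
  have hlen := length_le_of_mk_dvd hdvd
  rw [length_piWord, length_piWord] at hlen
  rw [← (dedup_sublist r).eq_of_length_le hlen]
  exact nodup_dedup r

theorem nodup_iff_mk_piWord_isRightLcm {r : List S} :
    r.Nodup ↔ (∀ x ∈ r, mk op [x] ∣ mk op (piWord op r)) ∧
      ∀ m, (∀ x ∈ r, mk op [x] ∣ m) → mk op (piWord op r) ∣ m :=
  ⟨fun hr => ⟨fun _ hx => mk_dvd_mk_piWord hinj hRC hr hx, fun _ => mk_piWord_dvd hinj hRC hr⟩,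
    fun h => nodup_of_mk_piWord_dvd hinj hRC h.2⟩

end Omega

section Opposite

variable {S : Type*} {op : S → S → S}
  (hbij : Function.Bijective fun p : S × S => (op p.1 p.2, op p.2 p.1))

noncomputable def opp (a b : S) : S := ((Equiv.ofBijective _ hbij).symm (a, b)).1

include hbij

lemma opp_eq {s t a b : S} (ha : op s t = a) (hb : op t s = b) : opp hbij a b = s := by
  subst ha hb
  exact congrArg Prod.fst ((Equiv.ofBijective _ hbij).symm_apply_apply (s, t))

lemma exists_op_eq (a b : S) : ∃ s t, op s t = a ∧ op t s = b := by
  obtain ⟨⟨s, t⟩, h⟩ := hbij.2 (a, b)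
  exact ⟨s, t, congrArg Prod.fst h, congrArg Prod.snd h⟩

lemma op_ne_op {s t : S} (h : s ≠ t) : op s t ≠ op t s := fun heq => by
  have : ((s, t) : S × S) = (t, s) := hbij.1 (Prod.ext heq heq.symm)
  exact h (congrArg Prod.fst this)

lemma opp_injective (hinj : ∀ s, Function.Injective (op s)) (a : S) :
    Function.Injective (opp hbij a) := by
  intro b b' h
  obtain ⟨s, t, rfl, rfl⟩ := exists_op_eq hbij a b
  obtain ⟨s', t', ha, rfl⟩ := exists_op_eq hbij (op s t) b'
  obtain rfl : s' = s := by rw [← opp_eq hbij ha rfl, ← h, opp_eq hbij rfl rfl]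
  rw [hinj s' ha]

lemma rcLaw_opp (hlb : ∀ s, Function.Bijective (op s)) (hRC : RCLaw op) : RCLaw (opp hbij) := by
  intro a b c
  obtain ⟨s, t, rfl, rfl⟩ := exists_op_eq hbij a b
  obtain ⟨x, y, rfl, hp⟩ := exists_op_eq hbij s (opp hbij (op s t) c)
  obtain ⟨w, rfl⟩ := (hlb x).2 t
  obtain ⟨p, q, hpq, rfl⟩ := exists_op_eq hbij (op (op x y) (op x w)) c
  rw [opp_eq hbij hpq rfl] at hp
  subst hp
  -- now `a = (x∘y)∘(x∘w)`, `b = (x∘w)∘(x∘y)`, and the right-cyclic law gives `c = (y∘w)∘(y∘x)`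
  obtain rfl : q = op y w := (hlb _).1 (hpq.trans (hRC x y w))
  rw [opp_eq hbij rfl rfl, opp_eq hbij hpq rfl, opp_eq hbij rfl rfl,
    opp_eq hbij (hRC x w y).symm (hRC y w x).symm, opp_eq hbij rfl rfl, opp_eq hbij rfl rfl]

end Opposite

section Reverse

variable {S : Type*}

lemma mk_reverse_eq_of_mk_eq {θ₁ θ₂ : S → S → S}
    (h : ∀ s t, s ≠ t → mk θ₂ [θ₁ s t, s] = mk θ₂ [θ₁ t s, t]) {u v : List S}
    (huv : mk θ₁ u = mk θ₁ v) : mk θ₂ u.reverse = mk θ₂ v.reverse :=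
  mk_eq_mk_induction (fun u v => mk θ₂ u.reverse = mk θ₂ v.reverse) (fun _ => rfl) Eq.symm
    Eq.trans (fun h h' => by rw [reverse_append, reverse_append, mk_append, mk_append, h, h'])
    h huv

variable {op : S → S → S} (hbij : Function.Bijective fun p : S × S => (op p.1 p.2, op p.2 p.1))
include hbij

lemma mk_opp_reverse_eq_iff {u v : List S} :
    mk (opp hbij) u.reverse = mk (opp hbij) v.reverse ↔ mk op u = mk op v := by
  refine ⟨fun h => ?_, mk_reverse_eq_of_mk_eq fun s t hst => ?_⟩
  · rw [← reverse_reverse u, ← reverse_reverse v]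
    refine mk_reverse_eq_of_mk_eq (fun a b hab => ?_) h
    obtain ⟨s, t, rfl, rfl⟩ := exists_op_eq hbij a b
    rw [opp_eq hbij rfl rfl, opp_eq hbij rfl rfl]
    exact mk_pair fun hst => hab (hst ▸ rfl)
  · have h := mk_pair (θ := opp hbij) (op_ne_op hbij hst)
    rwa [opp_eq hbij rfl rfl, opp_eq hbij rfl rfl] at h

lemma exists_mul_mk_eq_iff {u v : List S} :
    (∃ c, mk op v = c * mk op u) ↔ mk (opp hbij) u.reverse ∣ mk (opp hbij) v.reverse := by
  constructor
  · rintro ⟨c, hc⟩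
    obtain ⟨w, rfl⟩ := mk_surjective c
    rw [← mk_append, ← mk_opp_reverse_eq_iff hbij, reverse_append, mk_append] at hc
    exact ⟨_, hc⟩
  · rintro ⟨c, hc⟩
    obtain ⟨w, rfl⟩ := mk_surjective c
    rw [← mk_append, ← reverse_reverse w, ← reverse_append, mk_opp_reverse_eq_iff hbij] at hc
    exact ⟨mk op w.reverse, by rw [hc, mk_append]⟩

variable [DecidableEq S] (hlb : ∀ s, Function.Bijective (op s)) (hRC : RCLaw op)
include hlb hRC

theorem mk_piWord_isLeftLcm {r : List S} (hr : r.Nodup) :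
    (∀ a ∈ r, ∃ c, mk op (piWord op r) = c * mk op [omegaL op (r.erase a) a]) ∧
      ∀ m, (∀ a ∈ r, ∃ c, m = c * mk op [omegaL op (r.erase a) a]) →
        ∃ c, m = c * mk op (piWord op r) := by
  have hinj : ∀ s, Function.Injective (op s) := fun s => (hlb s).1
  have hleft : ∀ a ∈ r, ∃ c, mk op (piWord op r) = c * mk op [omegaL op (r.erase a) a] :=
    fun a ha => ⟨_, mk_piWord_eq_mul hinj hRC hr ha⟩
  refine ⟨hleft, fun m hm => ?_⟩
  obtain ⟨k, rfl⟩ := mk_surjective m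
  set T := r.map fun a => omegaL op (r.erase a) a
  have hT : T.Nodup := hr.map_on fun a ha b hb h => by
    by_contra hab
    obtain ⟨x, y, hxy, hx, hy⟩ := exists_omegaL_erase_eq hinj hRC ha hb hab
    exact op_ne_op hbij hxy (hx.symm.trans (h.trans hy))
  have hinj' := opp_injective hbij hinj
  have hRC' := rcLaw_opp hbij hlb hRC
  have hdvd : ∀ {v}, (∀ a ∈ r, ∃ c, mk op v = c * mk op [omegaL op (r.erase a) a]) →
      ∀ x ∈ T, mk (opp hbij) [x] ∣ mk (opp hbij) v.reverse := fun hv x hx => by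
    obtain ⟨a, ha, rfl⟩ := mem_map.1 hx
    exact (exists_mul_mk_eq_iff hbij).1 (hv a ha)
  have hlcm : mk (opp hbij) (piWord (opp hbij) T) = mk (opp hbij) (piWord op r).reverse :=
    mk_eq_of_mk_dvd_of_length_eq (mk_piWord_dvd hinj' hRC' hT (hdvd hleft)) (by simp [T])
  rw [exists_mul_mk_eq_iff hbij, ← hlcm]
  exact mk_piWord_dvd hinj' hRC' hT (hdvd hm)

end Reverse

section Tuples

variable {S : Type*} {op : S → S → S}

lemma perm_ofFn_succAbove {α : Type*} {n : ℕ} (f : Fin (n + 1) → α) (i : Fin (n + 1)) :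
    (ofFn f).Perm (f i :: ofFn (f ∘ i.succAbove)) := by
  rw [← Multiset.coe_eq_coe, ← Fin.univ_val_map, ← Multiset.cons_coe, ← Fin.univ_val_map,
    Fin.univ_succAbove _ i]
  simp [Function.comp_def]

lemma OmegaFin_eq_omegaL (n : ℕ) (x : Fin (n + 1) → S) :
    OmegaFin op n x = omegaL op (ofFn fun j : Fin n => x j.castSucc).reverse (x (Fin.last n)) := by
  induction n with
  | zero => rfl
  | succ n ih =>
    rw [OmegaFin, ih, ih, ofFn_succ', concat_eq_append, reverse_append]
    simp [omegaL, fun j : Fin n => (j.isLt.ne : (j : ℕ) ≠ n)]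

lemma smGen_eq_mk (x : S) : smGen op x = mk op [x] := rfl

lemma PiFin_smGen_eq_mk (n : ℕ) (x : Fin n → S) :
    PiFin op (smGen op) n x = mk op (piWord op (ofFn x).reverse) := by
  induction n with
  | zero => simp [PiFin, piWord]
  | succ n ih =>
    rw [ofFn_succ', concat_eq_append, reverse_append, reverse_singleton, singleton_append, piWord,
      mk_append, ← ih, ← OmegaFin_eq_omegaL, PiFin, finRange_succ_last, map_append, prod_append,
      map_map]
    rfl

lemma OmegaFin_snoc_succAbove [DecidableEq S] (hRC : RCLaw op) {n : ℕ} (s : Fin (n + 1) → S)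
    (i : Fin (n + 1)) :
    OmegaFin op n (Fin.snoc (fun m : Fin n => s (i.succAbove m)) (s i)) =
      omegaL op ((ofFn s).reverse.erase (s i)) (s i) := by
  rw [OmegaFin_eq_omegaL]
  simp only [Fin.snoc_castSucc, Fin.snoc_last]
  refine omegaL_perm hRC ?_ _
  calc (ofFn fun m => s (i.succAbove m)).reverse
      ~ (s i :: ofFn (s ∘ i.succAbove)).erase (s i) := by
        rw [erase_cons_head]; exact reverse_perm _
    _ ~ (ofFn s).erase (s i) := ((perm_ofFn_succAbove s i).erase _).symm
    _ ~ (ofFn s).reverse.erase (s i) := ((reverse_perm _).erase _).symm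

end Tuples

end RCQuasigroup

open RCQuasigroup in
/-- In the structure monoid `M` of an RC-quasigroup `(S,∘)`, elements
`s₁,…,sₙ` of `S` are pairwise distinct iff `Πₙ(s₁,…,sₙ)` is the right-lcm of `s₁,…,sₙ`;
and if moreover `(S,∘)` is bijective and the `sᵢ` are pairwise distinct, then `Πₙ(s₁,…,sₙ)`
is the left-lcm of the elements `s̃ᵢ = Ωₙ(s₁,…,ŝᵢ,…,sₙ,sᵢ)`. -/
theorem statement9 {S : Type*} (op : S → S → S)
    (hRC : RCLaw op) (hlb : ∀ s : S, Function.Bijective (op s)) :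
    ∀ (n : ℕ) (s : Fin (n + 1) → S),
      (Function.Injective s ↔
        ((∀ i, smGen op (s i) ∣ PiFin op (smGen op) (n + 1) s) ∧
          ∀ k, (∀ i, smGen op (s i) ∣ k) → PiFin op (smGen op) (n + 1) s ∣ k)) ∧
      (Function.Bijective (fun p : S × S => (op p.1 p.2, op p.2 p.1)) →
        Function.Injective s →
        ((∀ i : Fin (n + 1), ∃ c, PiFin op (smGen op) (n + 1) s =
            c * smGen op (OmegaFin op n (Fin.snoc (fun m : Fin n => s (i.succAbove m)) (s i)))) ∧
          ∀ k, (∀ i : Fin (n + 1), ∃ c, k =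
              c * smGen op (OmegaFin op n (Fin.snoc (fun m : Fin n => s (i.succAbove m)) (s i)))) →
            ∃ c, k = c * PiFin op (smGen op) (n + 1) s)) := by
  classical
  intro n s
  have hinj : ∀ t, Function.Injective (op t) := fun t => (hlb t).1
  have hr : (List.ofFn s).reverse.Nodup ↔ Function.Injective s := by
    rw [List.nodup_reverse, List.nodup_ofFn]
  simp only [PiFin_smGen_eq_mk, smGen_eq_mk, OmegaFin_snoc_succAbove hRC]
  refine ⟨?_, fun hbij hs => ?_⟩
  · rw [← hr, nodup_iff_mk_piWord_isRightLcm hinj hRC]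
    simp only [List.mem_reverse, List.forall_mem_ofFn_iff]
  · simpa only [List.mem_reverse, List.forall_mem_ofFn_iff] using
      mk_piWord_isLeftLcm hbij hlb hRC (hr.2 hs)
end

section
/- Let (S,∘) be an RC-quasigroup and M its structure monoid. Then the map ν from the free abelian monoid ℕ^(S) (finitely supported functions S → ℕ) to M defined by ν(s₁⋯sₙ) = Πₙ(s₁,…,sₙ) is well defined (independent of the chosen ordering s₁,…,sₙ of a multiset) and is a right I-structure on M: ν is a bijection, ν(1) = 1, ν(s) = s for every s in S, and for every a in ℕ^(S) one has {ν(a·s) : s ∈ S} = {ν(a)·s : s ∈ S}. -/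
/-!
By the right-cyclic law the monomial `Ω(x₁,…,xₙ,t)` is symmetric in `x₁,…,xₙ`, so
`Ω_a(t) := Ω(x₁,…,xₙ,t)` depends only on `a = x₁⋯xₙ ∈ ℕ^(S)`, and `t ↦ Ω_a(t)` is a bijection
since left translations are. Swapping two adjacent arguments of `Πₙ` replaces two adjacent
factors `s(s∘t)` by `t(t∘s)`, so `ν` is well defined in the structure monoid, and
`ν(a·t) = ν(a)·Ω_a(t)` gives the `I`-structure property and shows that `ν` is onto.
Conversely, `(a, s) ↦ a·Ω_a⁻¹(s)` is a right action of the free monoid on `ℕ^(S)` that respects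
the defining relations, hence an action of the structure monoid, whose orbit map at `1`
inverts `ν`.
-/

theorem Finsupp.toMultiset_injective {α : Type*} :
    Function.Injective (Finsupp.toMultiset (α := α)) := by
  classical
  exact Finsupp.coe_orderIsoMultiset (ι := α) ▸ (Finsupp.orderIsoMultiset (ι := α)).injective

theorem Finsupp.toMultiset_add_single {α : Type*} (a : α →₀ ℕ) (t : α) :
    Finsupp.toMultiset (a + Finsupp.single t 1) = t ::ₘ Finsupp.toMultiset a := by
  rw [map_add, Finsupp.toMultiset_single, one_nsmul, add_comm, Multiset.singleton_add]

theorem Finsupp.toMultiset_sum_map_single {α : Type*} (l : List α) :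
    Finsupp.toMultiset (l.map fun s => Finsupp.single s 1).sum = ↑l := by
  induction l with
  | nil => rfl
  | cons s l ih =>
    rw [List.map_cons, List.sum_cons, add_comm, Finsupp.toMultiset_add_single, ih,
      Multiset.cons_coe]

namespace RCQuasigroup

open Finsupp

variable {S : Type*} (op : S → S → S)

/-- `omegaList op l t = Ω(x₁,…,xₙ,t)` for `l = [xₙ,…,x₁]`: listing the earlier arguments most
recent first makes the recursion of `Ω` structural. -/
def omegaList : List S → S → S
  | [], t => t
  | a :: l, t => op (omegaList l a) (omegaList l t)

theorem omegaList_perm (hRC : RCLaw op) {l l' : List S} (h : l.Perm l') :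
    omegaList op l = omegaList op l' := by
  induction h with
  | nil => rfl
  | cons x _ ih => funext t; simp only [omegaList, ih]
  | swap x y l => funext t; exact hRC _ _ _
  | trans _ _ ih₁ ih₂ => rw [ih₁, ih₂]

theorem omegaList_bijective (hlb : ∀ s : S, Function.Bijective (op s)) :
    ∀ l : List S, Function.Bijective (omegaList op l)
  | [] => Function.bijective_id
  | a :: l => (hlb (omegaList op l a)).comp (omegaList_bijective hlb l)

theorem smGen_mul_smGen_op (s t : S) :
    smGen op s * smGen op (op s t) = smGen op t * smGen op (op t s) := by
  obtain rfl | hst := eq_or_ne s t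
  · rfl
  · rw [smGen, smGen, smGen, smGen, ← map_mul, ← map_mul, Con.coe_mk', Con.eq]
    exact ConGen.Rel.of _ _ ⟨s, t, hst, rfl, rfl⟩

/-- `piList op l = Πₙ(x₁,…,xₙ)` for `l = [xₙ,…,x₁]`. -/
def piList : List S → StructureMonoid op
  | [] => 1
  | a :: l => piList l * smGen op (omegaList op l a)

theorem piList_perm (hRC : RCLaw op) {l l' : List S} (h : l.Perm l') :
    piList op l = piList op l' := by
  induction h with
  | nil => rfl
  | cons x h ih => rw [piList, piList, ih, omegaList_perm op hRC h]
  | swap x y l =>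
    simp only [piList, omegaList, mul_assoc]
    rw [smGen_mul_smGen_op]
  | trans _ _ ih₁ ih₂ => rw [ih₁, ih₂]

theorem omegaFin_eq_omegaList (n : ℕ) (x : Fin (n + 1) → S) :
    OmegaFin op n x =
      omegaList op (List.ofFn fun i : Fin n => x i.castSucc).reverse (x (Fin.last n)) := by
  induction n with
  | zero => rfl
  | succ n ih =>
    rw [OmegaFin, ih, ih, List.ofFn_succ', List.concat_eq_append, List.reverse_append]
    simp [omegaList, Nat.ne_of_lt]

theorem piFin_succ {M : Type*} [Monoid M] (ι : S → M) (n : ℕ) (x : Fin (n + 1) → S) :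
    PiFin op ι (n + 1) x = PiFin op ι n (fun i => x i.castSucc) * ι (OmegaFin op n x) := by
  rw [PiFin, PiFin, ← List.ofFn_eq_map, ← List.ofFn_eq_map, List.ofFn_succ',
    List.concat_eq_append, List.prod_append, List.prod_singleton]
  rfl

theorem piFin_eq_piList (n : ℕ) (x : Fin n → S) :
    PiFin op (smGen op) n x = piList op (List.ofFn x).reverse := by
  induction n with
  | zero => rfl
  | succ n ih =>
    rw [piFin_succ, ih, omegaFin_eq_omegaList, List.ofFn_succ' x, List.concat_eq_append,
      List.reverse_append]
    rfl

noncomputable def nu (hRC : RCLaw op) (a : S →₀ ℕ) : StructureMonoid op :=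
  Quotient.liftOn (toMultiset a) (piList op) fun _ _ h => piList_perm op hRC h

theorem nu_eq_piList (hRC : RCLaw op) {a : S →₀ ℕ} {l : List S} (h : toMultiset a = ↑l) :
    nu op hRC a = piList op l := by
  rw [nu, h]
  rfl

theorem nu_add_single (hRC : RCLaw op) {a : S →₀ ℕ} {l : List S} (h : toMultiset a = ↑l)
    (t : S) : nu op hRC (a + single t 1) = nu op hRC a * smGen op (omegaList op l t) := by
  rw [nu_eq_piList op hRC h, nu_eq_piList op hRC (l := t :: l)]
  · rfl
  · rw [toMultiset_add_single, h, Multiset.cons_coe]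

theorem nu_zero (hRC : RCLaw op) : nu op hRC 0 = 1 :=
  nu_eq_piList op hRC (l := []) toMultiset_zero

theorem nu_single (hRC : RCLaw op) (s : S) : nu op hRC (single s 1) = smGen op s := by
  rw [nu_eq_piList op hRC (l := [s]), piList, piList, one_mul]
  · rfl
  · rw [toMultiset_single, one_nsmul]
    rfl

theorem nu_sum_map_single (hRC : RCLaw op) (l : List S) :
    nu op hRC (l.map fun s => single s 1).sum = PiFin op (smGen op) l.length l.get := by
  rw [nu_eq_piList op hRC (toMultiset_sum_map_single l), piFin_eq_piList, List.ofFn_get]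
  exact piList_perm op hRC (List.reverse_perm l).symm

theorem range_nu_add_single (hRC : RCLaw op) (hlb : ∀ s : S, Function.Bijective (op s))
    (a : S →₀ ℕ) :
    Set.range (fun s => nu op hRC (a + single s 1)) =
      Set.range (fun s => nu op hRC a * smGen op s) := by
  have hl : toMultiset a = ↑(toMultiset a).toList := (Multiset.coe_toList _).symm
  simp_rw [nu_add_single op hRC hl]
  exact (omegaList_bijective op hlb _).2.range_comp fun s => nu op hRC a * smGen op s

/-- `mulGen a s = ν⁻¹(ν(a)·s)`. -/
noncomputable def mulGen (hlb : ∀ s : S, Function.Bijective (op s)) (a : S →₀ ℕ) (s : S) :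
    S →₀ ℕ :=
  a + single ((Equiv.ofBijective _ (omegaList_bijective op hlb (toMultiset a).toList)).symm s) 1

theorem mulGen_omegaList (hRC : RCLaw op) (hlb : ∀ s : S, Function.Bijective (op s))
    {a : S →₀ ℕ} {l : List S} (h : toMultiset a = ↑l) (t : S) :
    mulGen op hlb a (omegaList op l t) = a + single t 1 := by
  have hperm : (toMultiset a).toList.Perm l :=
    Multiset.coe_eq_coe.mp (by rw [Multiset.coe_toList, h])
  rw [mulGen, (Equiv.symm_apply_eq _).mpr (congrFun (omegaList_perm op hRC hperm).symm t)]

theorem nu_mulGen (hRC : RCLaw op) (hlb : ∀ s : S, Function.Bijective (op s)) (a : S →₀ ℕ)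
    (s : S) : nu op hRC (mulGen op hlb a s) = nu op hRC a * smGen op s := by
  have hl : toMultiset a = ↑(toMultiset a).toList := (Multiset.coe_toList _).symm
  obtain ⟨t, rfl⟩ := (omegaList_bijective op hlb (toMultiset a).toList).2 s
  rw [mulGen_omegaList op hRC hlb hl, nu_add_single op hRC hl]

theorem mulGen_mulGen_omegaList (hRC : RCLaw op) (hlb : ∀ s : S, Function.Bijective (op s))
    {a : S →₀ ℕ} {l : List S} (h : toMultiset a = ↑l) (u v : S) :
    mulGen op hlb (mulGen op hlb a (omegaList op l u)) (op (omegaList op l u) (omegaList op l v))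
      = a + single u 1 + single v 1 := by
  rw [mulGen_omegaList op hRC hlb h]
  refine mulGen_omegaList op hRC hlb (l := u :: l) ?_ v
  rw [toMultiset_add_single, h, Multiset.cons_coe]

theorem mulGen_mulGen_op (hRC : RCLaw op) (hlb : ∀ s : S, Function.Bijective (op s))
    (a : S →₀ ℕ) (s t : S) :
    mulGen op hlb (mulGen op hlb a s) (op s t) = mulGen op hlb (mulGen op hlb a t) (op t s) := by
  have hl : toMultiset a = ↑(toMultiset a).toList := (Multiset.coe_toList _).symm
  obtain ⟨u, rfl⟩ := (omegaList_bijective op hlb (toMultiset a).toList).2 s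
  obtain ⟨v, rfl⟩ := (omegaList_bijective op hlb (toMultiset a).toList).2 t
  rw [mulGen_mulGen_omegaList op hRC hlb hl, mulGen_mulGen_omegaList op hRC hlb hl,
    add_right_comm]

noncomputable def freeAct (hlb : ∀ s : S, Function.Bijective (op s)) :
    FreeMonoid S →* (Function.End (S →₀ ℕ))ᵐᵒᵖ :=
  FreeMonoid.lift fun s => MulOpposite.op fun a => mulGen op hlb a s

theorem conGen_le_ker_freeAct (hRC : RCLaw op) (hlb : ∀ s : S, Function.Bijective (op s)) :
    conGen (rcRel op) ≤ Con.ker (freeAct op hlb) := by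
  refine Con.conGen_le.mpr ?_
  rintro _ _ ⟨s, t, -, rfl, rfl⟩
  simp only [Con.ker_rel, map_mul, freeAct, FreeMonoid.lift_eval_of]
  exact congrArg MulOpposite.op (funext fun a => mulGen_mulGen_op op hRC hlb a s t)

noncomputable def act (hRC : RCLaw op) (hlb : ∀ s : S, Function.Bijective (op s)) :
    StructureMonoid op →* (Function.End (S →₀ ℕ))ᵐᵒᵖ :=
  Con.lift _ (freeAct op hlb) (conGen_le_ker_freeAct op hRC hlb)

noncomputable def nuInv (hRC : RCLaw op) (hlb : ∀ s : S, Function.Bijective (op s))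
    (m : StructureMonoid op) : S →₀ ℕ :=
  (act op hRC hlb m).unop 0

theorem nuInv_mul_smGen (hRC : RCLaw op) (hlb : ∀ s : S, Function.Bijective (op s))
    (m : StructureMonoid op) (s : S) :
    nuInv op hRC hlb (m * smGen op s) = mulGen op hlb (nuInv op hRC hlb m) s := by
  rw [nuInv, map_mul, MulOpposite.unop_mul]
  rfl

theorem nuInv_piList (hRC : RCLaw op) (hlb : ∀ s : S, Function.Bijective (op s)) (l : List S) :
    nuInv op hRC hlb (piList op l) = (l.map fun s => single s 1).sum := by
  induction l with
  | nil => rfl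
  | cons t l ih =>
    rw [piList, nuInv_mul_smGen, ih, mulGen_omegaList op hRC hlb (toMultiset_sum_map_single l),
      List.map_cons, List.sum_cons, add_comm]

theorem nuInv_nu (hRC : RCLaw op) (hlb : ∀ s : S, Function.Bijective (op s)) :
    Function.LeftInverse (nuInv op hRC hlb) (nu op hRC) := by
  intro a
  have hl : toMultiset a = ↑(toMultiset a).toList := (Multiset.coe_toList _).symm
  rw [nu_eq_piList op hRC hl, nuInv_piList]
  exact toMultiset_injective (by rw [toMultiset_sum_map_single, ← hl])

theorem exists_nu_eq_nu_mul (hRC : RCLaw op) (hlb : ∀ s : S, Function.Bijective (op s))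
    (m : StructureMonoid op) (a : S →₀ ℕ) : ∃ b, nu op hRC b = nu op hRC a * m := by
  induction m using Con.induction_on with | H w => ?_
  induction w using FreeMonoid.inductionOn generalizing a with
  | one => exact ⟨a, by rw [Con.coe_one, mul_one]⟩
  | of s => exact ⟨mulGen op hlb a s, nu_mulGen op hRC hlb a s⟩
  | mul x y ihx ihy =>
    obtain ⟨b, hb⟩ := ihx a
    obtain ⟨c, hc⟩ := ihy b
    exact ⟨c, by rw [hc, hb, Con.coe_mul, mul_assoc]⟩

theorem nu_bijective (hRC : RCLaw op) (hlb : ∀ s : S, Function.Bijective (op s)) :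
    Function.Bijective (nu op hRC) :=
  ⟨(nuInv_nu op hRC hlb).injective, fun m =>
    (exists_nu_eq_nu_mul op hRC hlb m 0).imp fun _ hb => by rw [hb, nu_zero, one_mul]⟩

end RCQuasigroup

/-- For an RC-quasigroup `(S,∘)` with structure monoid `M`, the map `ν`
from the free abelian monoid `ℕ^(S)` (finitely supported functions `S → ℕ`) to `M` defined by
`ν(s₁⋯sₙ) = Πₙ(s₁,…,sₙ)` is well defined and is a right `I`-structure on `M`. -/
theorem statement11 {S : Type*} (op : S → S → S)
    (hRC : RCLaw op) (hlb : ∀ s : S, Function.Bijective (op s)) :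
    ∃ ν : (S →₀ ℕ) → StructureMonoid op,
      (∀ l : List S,
        ν ((l.map fun s => Finsupp.single s 1).sum) = PiFin op (smGen op) l.length l.get) ∧
      Function.Bijective ν ∧
      ν 0 = 1 ∧
      (∀ s : S, ν (Finsupp.single s 1) = smGen op s) ∧
      (∀ a : S →₀ ℕ,
        Set.range (fun s : S => ν (a + Finsupp.single s 1)) =
          Set.range fun s : S => ν a * smGen op s) := by
  exact ⟨RCQuasigroup.nu op hRC, RCQuasigroup.nu_sum_map_single op hRC,
    RCQuasigroup.nu_bijective op hRC hlb, RCQuasigroup.nu_zero op hRC,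
    RCQuasigroup.nu_single op hRC, RCQuasigroup.range_nu_add_single op hRC hlb⟩
end

section
/- Let M be a left-cancellative monoid generated by a set S, let M̄ be a commutative monoid generated by S satisfying: for all s,t,s′,t′ in S, if s ≠ t and st′ = ts′ in M̄ then s′ = s and t′ = t. Let ν : M̄ → M be a bijection with ν(1) = 1 and ν(s) = s for s in S, and let ψ assign to each a in M̄ a permutation ψ(a) of S such that ν(a·s) = ν(a)·ψ(a)(s) for all a in M̄ and s in S, with ψ(1) the identity. Define s∘t = ψ(s)(t) for s,t in S. Then (S,∘) is an RC-quasigroup: ∘ obeys the right-cyclic law (x∘y)∘(x∘z) = (y∘x)∘(y∘z) and all left-translations t ↦ s∘t are bijective. -/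
/-!
Peeling the last two generators of `ν(a y z)` in both orders (`M̄` is commutative) and
cancelling `ν a` on the left gives an equality between two products of two generators in `M`.
Every such product is `ν` of a product of two generators of `M̄`, so injectivity of `ν`
together with the hypothesis on `M̄` identifies the factors:
`ψ(a y)(z) = ψ(ψ(a)(y))(ψ(a)(z))` for `y ≠ z`, and then for all `z`, since two permutations
agreeing off one point agree everywhere. For `a = x` this reads
`ψ(x y)(z) = (x∘y)∘(x∘z)`, which is symmetric in `x, y` because `x y = y x`.
-/

theorem Equiv.Perm.ext_of_forall_ne {S : Type*} {f g : Equiv.Perm S} (y : S)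
    (h : ∀ z, z ≠ y → f z = g z) : f = g := by
  ext z
  by_cases hz : z = y
  · subst hz
    obtain ⟨w, hw⟩ := g.surjective (f z)
    by_cases hw' : w = z
    · rw [← hw, hw']
    · exact absurd (f.injective ((h w hw').trans hw)) hw'
  · exact h z hz

namespace RightIStructure

variable {S M Mb : Type*} [Monoid M] [CommMonoid Mb] {ιM : S → M} {ιb : S → Mb}
  {ν : Mb → M} {ψ : Mb → Equiv.Perm S}

theorem mul_perm_apply_comm (hcancel : ∀ a b c : M, a * b = a * c → b = c)
    (hψ : ∀ (a : Mb) (s : S), ν (a * ιb s) = ν a * ιM (ψ a s)) (a : Mb) (y z : S) :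
    ιM (ψ a y) * ιM (ψ (a * ιb y) z) = ιM (ψ a z) * ιM (ψ (a * ιb z) y) := by
  apply hcancel (ν a)
  simp only [← mul_assoc, ← hψ]
  rw [mul_right_comm]

theorem map_gen_mul_symm_apply (hνS : ∀ s : S, ν (ιb s) = ιM s)
    (hψ : ∀ (a : Mb) (s : S), ν (a * ιb s) = ν a * ιM (ψ a s)) (s r : S) :
    ν (ιb s * ιb ((ψ (ιb s)).symm r)) = ιM s * ιM r := by
  rw [hψ, hνS, Equiv.apply_symm_apply]

theorem perm_mul_apply_of_ne (hcancel : ∀ a b c : M, a * b = a * c → b = c)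
    (hcond : ∀ s t s' t' : S, s ≠ t → ιb s * ιb t' = ιb t * ιb s' → s' = s ∧ t' = t)
    (hν : Function.Injective ν) (hνS : ∀ s : S, ν (ιb s) = ιM s)
    (hψ : ∀ (a : Mb) (s : S), ν (a * ιb s) = ν a * ιM (ψ a s))
    {a : Mb} {y z : S} (hyz : z ≠ y) :
    ψ (a * ιb y) z = ψ (ιb (ψ a y)) (ψ a z) := by
  set t := (ψ (ιb (ψ a y))).symm (ψ (a * ιb y) z)
  have hprod : ιb (ψ a y) * ιb t =
      ιb (ψ a z) * ιb ((ψ (ιb (ψ a z))).symm (ψ (a * ιb z) y)) := by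
    apply hν
    rw [map_gen_mul_symm_apply hνS hψ, map_gen_mul_symm_apply hνS hψ,
      mul_perm_apply_comm hcancel hψ]
  have ht : t = ψ a z :=
    (hcond _ _ _ _ ((ψ a).injective.ne hyz.symm) hprod).2
  rw [← ht, Equiv.apply_symm_apply]

theorem perm_mul (hcancel : ∀ a b c : M, a * b = a * c → b = c)
    (hcond : ∀ s t s' t' : S, s ≠ t → ιb s * ιb t' = ιb t * ιb s' → s' = s ∧ t' = t)
    (hν : Function.Injective ν) (hνS : ∀ s : S, ν (ιb s) = ιM s)
    (hψ : ∀ (a : Mb) (s : S), ν (a * ιb s) = ν a * ιM (ψ a s)) (a : Mb) (y : S) :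
    ψ (a * ιb y) = (ψ a).trans (ψ (ιb (ψ a y))) :=
  Equiv.Perm.ext_of_forall_ne y fun _ hz => perm_mul_apply_of_ne hcancel hcond hν hνS hψ hz

end RightIStructure

theorem statement12_general {S M Mb : Type*} [Monoid M] [CommMonoid Mb]
    (ιM : S → M) (ιb : S → Mb)
    (hcancel : ∀ a b c : M, a * b = a * c → b = c)
    (hcond : ∀ s t s' t' : S, s ≠ t → ιb s * ιb t' = ιb t * ιb s' → s' = s ∧ t' = t)
    (ν : Mb → M) (hν : Function.Bijective ν)
    (hνS : ∀ s : S, ν (ιb s) = ιM s)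
    (ψ : Mb → Equiv.Perm S)
    (hψ : ∀ (a : Mb) (s : S), ν (a * ιb s) = ν a * ιM (ψ a s))
    (op : S → S → S) (hop : ∀ s t : S, op s t = ψ (ιb s) t) :
    RCLaw op ∧ ∀ s : S, Function.Bijective (op s) := by
  have hrc : ∀ x y z : S, ψ (ιb x * ιb y) z = ψ (ιb (ψ (ιb x) y)) (ψ (ιb x) z) := fun x y z =>
    DFunLike.congr_fun (RightIStructure.perm_mul hcancel hcond hν.injective hνS hψ _ _) z
  refine ⟨fun x y z => ?_, fun s => ?_⟩
  · simp only [hop, ← hrc, mul_comm (ιb x)]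
  · rw [show op s = ψ (ιb s) from funext (hop s)]
    exact (ψ (ιb s)).bijective

/-- Let `M` be a left-cancellative monoid generated by `S`, `M̄` a
commutative monoid generated by `S` in which `s ≠ t` and `st′ = ts′` imply `s′ = s` and
`t′ = t`, and let `ν : M̄ → M` be a right `I`-structure of shape `(M̄,S)`, with associated
permutations `ψ(a)` of `S` satisfying `ν(a·s) = ν(a)·ψ(a)(s)` and `ψ(1) = id`. Then the
operation `s∘t = ψ(s)(t)` makes `(S,∘)` an RC-quasigroup. -/
theorem statement12 {S M Mb : Type*} [Monoid M] [CommMonoid Mb]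
    (ιM : S → M) (ιb : S → Mb)
    (hgenM : Submonoid.closure (Set.range ιM) = ⊤)
    (hgenMb : Submonoid.closure (Set.range ιb) = ⊤)
    (hcancel : ∀ a b c : M, a * b = a * c → b = c)
    (hcond : ∀ s t s' t' : S, s ≠ t → ιb s * ιb t' = ιb t * ιb s' → s' = s ∧ t' = t)
    (ν : Mb → M) (hν : Function.Bijective ν)
    (hν1 : ν 1 = 1) (hνS : ∀ s : S, ν (ιb s) = ιM s)
    (ψ : Mb → Equiv.Perm S)
    (hψ : ∀ (a : Mb) (s : S), ν (a * ιb s) = ν a * ιM (ψ a s))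
    (hψ1 : ψ 1 = Equiv.refl S)
    (op : S → S → S) (hop : ∀ s t : S, op s t = ψ (ιb s) t) :
    RCLaw op ∧ ∀ s : S, Function.Bijective (op s) :=
  statement12_general ιM ιb hcancel hcond ν hν hνS ψ hψ op hop
end

section
/- Let ν be a right I-structure based on S on a monoid M. Then: (1) M admits a length function (a monoid homomorphism λ : M → ℕ with λ(g) ≥ 1 for g ≠ 1 and λ(s)=1 for s ∈ S) and S is exactly the set of atoms of M; (2) ν is compatible with left-division: for all a,b in ℕ^(S), a divides b in ℕ^(S) if and only if ν(a) left-divides ν(b) in M; (3) any two elements of M admit a right-lcm. -/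
/-- total degree of a finitely supported function to ℕ -/
private def s13deg {α : Type*} (c : α →₀ ℕ) : ℕ := c.sum fun _ n => n

private lemma s13deg_add {α : Type*} (a b : α →₀ ℕ) :
    s13deg (a + b) = s13deg a + s13deg b :=
  Finsupp.sum_add_index' (fun _ => rfl) (fun _ _ _ => rfl)

private lemma s13deg_single {α : Type*} (s : α) : s13deg (Finsupp.single s 1) = 1 :=
  Finsupp.sum_single_index rfl

private lemma s13deg_eq_zero {α : Type*} {c : α →₀ ℕ} (h : s13deg c = 0) : c = 0 := by
  by_contra hc
  obtain ⟨s, hs⟩ := Finsupp.support_nonempty_iff.mpr hc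
  have h1 : c s ≤ s13deg c :=
    Finset.single_le_sum (f := fun t => c t) (fun _ _ => Nat.zero_le _) hs
  have h2 : c s ≠ 0 := Finsupp.mem_support_iff.mp hs
  omega

private lemma s13peel {α : Type*} (c : α →₀ ℕ) (hc : c ≠ 0) :
    ∃ (c' : α →₀ ℕ) (s : α), c = c' + Finsupp.single s 1 ∧ s13deg c' + 1 = s13deg c := by
  obtain ⟨s, hs⟩ := Finsupp.support_nonempty_iff.mpr hc
  have h1 : Finsupp.single s 1 ≤ c :=
    Finsupp.single_le_iff.mpr (Nat.one_le_iff_ne_zero.mpr (Finsupp.mem_support_iff.mp hs))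
  have hsum : c - Finsupp.single s 1 + Finsupp.single s 1 = c := tsub_add_cancel_of_le h1
  refine ⟨c - Finsupp.single s 1, s, hsum.symm, ?_⟩
  conv_rhs => rw [← hsum]
  rw [s13deg_add, s13deg_single]

/-- Let `ν` be a right `I`-structure based on `S ⊆ M` on a monoid `M`.
Then (1) `M` admits a length function and `S` is exactly the set of atoms of `M`;
(2) `ν` is compatible with left-division; (3) any two elements of `M` admit a right-lcm. -/
theorem statement13 {M : Type*} [Monoid M] (S : Set M)
    (hgen : Submonoid.closure S = ⊤)
    (ν : (↥S →₀ ℕ) → M)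
    (hbij : Function.Bijective ν)
    (hν0 : ν 0 = 1)
    (hνS : ∀ s : ↥S, ν (Finsupp.single s 1) = (s : M))
    (hI : ∀ a : ↥S →₀ ℕ,
      Set.range (fun s : ↥S => ν (a + Finsupp.single s 1)) =
        Set.range fun s : ↥S => ν a * (s : M)) :
    ((∃ lam : M → ℕ,
        (∀ a b : M, lam (a * b) = lam a + lam b) ∧
        (∀ g : M, g ≠ 1 → 1 ≤ lam g) ∧
        (∀ s : ↥S, lam (s : M) = 1)) ∧
      (∀ g : M, g ∈ S ↔ g ≠ 1 ∧ ∀ x y : M, g = x * y → x = 1 ∨ y = 1)) ∧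
    (∀ a b : ↥S →₀ ℕ, (∃ c, b = a + c) ↔ ν a ∣ ν b) ∧
    (∀ f g : M, ∃ h : M, f ∣ h ∧ g ∣ h ∧ ∀ k, f ∣ k → g ∣ k → h ∣ k) := by
  set e := Equiv.ofBijective ν hbij with he
  have heapp : ∀ a, e a = ν a := fun a => rfl
  have hesymm : ∀ a, e.symm (ν a) = a := fun a => by
    rw [← heapp]; exact e.symm_apply_apply a
  -- key consequences of the I-structure property
  have keyB : ∀ (a : ↥S →₀ ℕ) (s : ↥S), ∃ t : ↥S,
      ν (a + Finsupp.single s 1) = ν a * (t : M) := by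
    intro a s
    have : ν (a + Finsupp.single s 1) ∈ Set.range (fun s : ↥S => ν a * (s : M)) := by
      rw [← hI a]; exact ⟨s, rfl⟩
    obtain ⟨t, ht⟩ := this
    exact ⟨t, ht.symm⟩
  have keyA : ∀ (a : ↥S →₀ ℕ) (s : ↥S), ∃ t : ↥S,
      ν a * (s : M) = ν (a + Finsupp.single t 1) := by
    intro a s
    have : ν a * (s : M) ∈ Set.range (fun s : ↥S => ν (a + Finsupp.single s 1)) := by
      rw [hI a]; exact ⟨s, rfl⟩
    obtain ⟨t, ht⟩ := this
    exact ⟨t, ht.symm⟩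
  -- forward divisibility: ν (a + c) = ν a * h
  have dvdFwd : ∀ (n : ℕ) (c : ↥S →₀ ℕ), s13deg c = n → ∀ a, ∃ h, ν (a + c) = ν a * h := by
    intro n
    induction n with
    | zero =>
      intro c hc a
      rw [s13deg_eq_zero hc, add_zero]
      exact ⟨1, (mul_one _).symm⟩
    | succ n ih =>
      intro c hc a
      have hc0 : c ≠ 0 := by
        intro h; rw [h] at hc; simp [s13deg] at hc
      obtain ⟨c', s, rfl, hdeg⟩ := s13peel c hc0
      obtain ⟨h', hh'⟩ := ih c' (by omega) a
      obtain ⟨t, ht⟩ := keyB (a + c') s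
      exact ⟨h' * (t : M), by rw [← add_assoc, ht, hh', mul_assoc]⟩
  -- multiplication lemma: ν a * ν c = ν (a + d) with s13deg d = s13deg c
  have mulC : ∀ (n : ℕ) (c : ↥S →₀ ℕ), s13deg c = n → ∀ a,
      ∃ d, ν a * ν c = ν (a + d) ∧ s13deg d = s13deg c := by
    intro n
    induction n with
    | zero =>
      intro c hc a
      rw [s13deg_eq_zero hc]
      exact ⟨0, by rw [hν0, mul_one, add_zero], rfl⟩
    | succ n ih =>
      intro c hc a
      have hc0 : c ≠ 0 := by
        intro h; rw [h] at hc; simp [s13deg] at hc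
      obtain ⟨c', s, rfl, hdeg⟩ := s13peel c hc0
      obtain ⟨t, ht⟩ := keyB c' s
      obtain ⟨d', hd', hdeg'⟩ := ih c' (by omega) a
      obtain ⟨u, hu⟩ := keyA (a + d') t
      refine ⟨d' + Finsupp.single u 1, ?_, ?_⟩
      · rw [ht, ← mul_assoc, hd', hu, add_assoc]
      · rw [s13deg_add, s13deg_add, s13deg_single, s13deg_single, hdeg']
  -- the length function
  set lam : M → ℕ := fun g => s13deg (e.symm g) with hlam
  have lam_nu : ∀ a, lam (ν a) = s13deg a := fun a => by rw [hlam]; simp only [hesymm]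
  have lam_one : lam 1 = 0 := by rw [← hν0, lam_nu]; rfl
  have lam_zero : ∀ g : M, lam g = 0 → g = 1 := by
    intro g hg
    have : e.symm g = 0 := s13deg_eq_zero hg
    have := congrArg e this
    rw [Equiv.apply_symm_apply, heapp, hν0] at this
    exact this
  have lam_mul : ∀ f g : M, lam (f * g) = lam f + lam g := by
    intro f g
    obtain ⟨a, rfl⟩ := hbij.2 f
    obtain ⟨c, rfl⟩ := hbij.2 g
    obtain ⟨d, hd, hdeg⟩ := mulC (s13deg c) c rfl a
    rw [hd, lam_nu, lam_nu, lam_nu, s13deg_add, hdeg]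
  have lam_S : ∀ s : ↥S, lam (s : M) = 1 := by
    intro s
    rw [← hνS s, lam_nu, s13deg_single]
  have lam_pos : ∀ g : M, g ≠ 1 → 1 ≤ lam g := by
    intro g hg
    rcases Nat.eq_zero_or_pos (lam g) with h | h
    · exact absurd (lam_zero g h) hg
    · exact h
  -- part 2: divisibility compatibility
  have div_iff : ∀ a b : ↥S →₀ ℕ, (∃ c, b = a + c) ↔ ν a ∣ ν b := by
    intro a b
    constructor
    · rintro ⟨c, rfl⟩
      obtain ⟨h, hh⟩ := dvdFwd (s13deg c) c rfl a
      exact ⟨h, hh⟩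
    · rintro ⟨h, hh⟩
      obtain ⟨c, rfl⟩ := hbij.2 h
      obtain ⟨d, hd, -⟩ := mulC (s13deg c) c rfl a
      exact ⟨d, hbij.1 (by rw [hh, hd])⟩
  -- atoms
  have atoms : ∀ g : M, g ∈ S ↔ g ≠ 1 ∧ ∀ x y : M, g = x * y → x = 1 ∨ y = 1 := by
    intro g
    constructor
    · intro hg
      have hlg : lam g = 1 := lam_S ⟨g, hg⟩
      refine ⟨?_, ?_⟩
      · intro h1
        rw [h1, lam_one] at hlg
        exact one_ne_zero hlg.symm
      · intro x y hxy
        have hx : lam x + lam y = 1 := by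
          rw [← lam_mul, ← hxy, hlg]
        rcases Nat.eq_zero_or_pos (lam x) with h | h
        · exact Or.inl (lam_zero x h)
        · have : lam y = 0 := by omega
          exact Or.inr (lam_zero y this)
    · rintro ⟨hg1, hatom⟩
      obtain ⟨a, rfl⟩ := hbij.2 g
      have ha0 : a ≠ 0 := by
        intro h; rw [h, hν0] at hg1; exact hg1 rfl
      obtain ⟨a', s, rfl, -⟩ := s13peel a ha0
      obtain ⟨t, ht⟩ := keyB a' s
      rcases hatom (ν a') (t : M) ht with h | h
      · rw [ht, h, one_mul]; exact t.2
      · exfalso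
        have := lam_S t
        rw [h, lam_one] at this
        exact absurd this.symm one_ne_zero
  -- part 3: right lcms
  have lcm : ∀ f g : M, ∃ h : M, f ∣ h ∧ g ∣ h ∧ ∀ k, f ∣ k → g ∣ k → h ∣ k := by
    intro f g
    obtain ⟨a, rfl⟩ := hbij.2 f
    obtain ⟨b, rfl⟩ := hbij.2 g
    refine ⟨ν (a ⊔ b), ?_, ?_, ?_⟩
    · exact (div_iff a (a ⊔ b)).mp (le_iff_exists_add.mp le_sup_left)
    · exact (div_iff b (a ⊔ b)).mp (le_iff_exists_add.mp le_sup_right)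
    · intro k hak hbk
      obtain ⟨e', rfl⟩ := hbij.2 k
      have h1 : a ≤ e' := le_iff_exists_add.mpr ((div_iff a e').mpr hak)
      have h2 : b ≤ e' := le_iff_exists_add.mpr ((div_iff b e').mpr hbk)
      exact (div_iff (a ⊔ b) e').mp (le_iff_exists_add.mp (sup_le h1 h2))
  exact ⟨⟨⟨lam, lam_mul, lam_pos, lam_S⟩, atoms⟩, div_iff, lcm⟩
end
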